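/- arXiv:0707.1292 — 3 statements merged into one kernel-verified Lean document; each statement's English description precedes it below -/
import Mathlib

section
/- Let Λ be a finite rank-r graph with no sources, and let V and Ṽ be Λ-isometries on complex Hilbert spaces H and H̃ with minimal Cuntz-Pimsner dilations (K, ι, W) and (K̃, ι̃, W̃) respectively. Then the map U ↦ ι̃* ∘ U ∘ ι is an isometric bijection from the set of intertwiners {U ∈ B(K, K̃) : U W_λ = W̃_λ U for all λ ∈ Λ} onto the set {X ∈ B(H, H̃) : Σ_{λ∈Λ^n} Ṽ_λ X V_λ* = X for all n ∈ ℕ^r}. -/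
open scoped ComplexOrder
open ContinuousLinearMap

set_option synthInstance.maxHeartbeats 1000000
set_option maxHeartbeats 1000000

noncomputable section

universe u

/-- A rank-`r` graph: a countable small category whose morphisms form `Λ`, objects being
identified with degree-zero morphisms, equipped with a degree functor into `ℕ^r`
satisfying the unique factorisation property. -/
structure KGraph (r : ℕ) where
  Λ : Type
  countable : Countable Λ
  src : Λ → Λ
  tgt : Λ → Λ
  deg : Λ → Fin r → ℕ
  comp : Λ → Λ → Λ
  deg_src : ∀ l, deg (src l) = 0
  deg_tgt : ∀ l, deg (tgt l) = 0
  src_eq_self : ∀ l, deg l = 0 → src l = l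
  tgt_eq_self : ∀ l, deg l = 0 → tgt l = l
  comp_src_self : ∀ l, comp l (src l) = l
  tgt_comp_self : ∀ l, comp (tgt l) l = l
  src_comp : ∀ l m, src l = tgt m → src (comp l m) = src m
  tgt_comp : ∀ l m, src l = tgt m → tgt (comp l m) = tgt l
  deg_comp : ∀ l m, src l = tgt m → deg (comp l m) = deg l + deg m
  comp_assoc : ∀ l m n, src l = tgt m → src m = tgt n →
    comp (comp l m) n = comp l (comp m n)
  factorisation : ∀ (l : Λ) (m n : Fin r → ℕ), deg l = m + n →
    ∃! p : Λ × Λ, deg p.1 = m ∧ deg p.2 = n ∧ src p.1 = tgt p.2 ∧ comp p.1 p.2 = l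

namespace KGraph

variable {r : ℕ} (K : KGraph r)

/-- `|λ|`, the total degree of a morphism. -/
def degSum (l : K.Λ) : ℕ := ∑ j, K.deg l j

/-- The vertices `Λ⁰`, i.e. the degree-zero morphisms. -/
def IsVertex (l : K.Λ) : Prop := K.deg l = 0

/-- The pairs `(α, β)` describing the elements `μα = νβ` of `MCE(μ, ν)`. -/
def MCEPair (μ ν : K.Λ) (p : K.Λ × K.Λ) : Prop :=
  K.src μ = K.tgt p.1 ∧ K.src ν = K.tgt p.2 ∧ K.comp μ p.1 = K.comp ν p.2 ∧
    K.deg (K.comp μ p.1) = K.deg μ ⊔ K.deg ν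

/-- `Λ` is finitely aligned. -/
def FinitelyAligned : Prop := ∀ μ ν : K.Λ, {p : K.Λ × K.Λ | K.MCEPair μ ν p}.Finite

/-- `Λ` is row-finite. -/
def RowFinite : Prop :=
  ∀ (n : Fin r → ℕ) (a : K.Λ), {l : K.Λ | K.deg l = n ∧ K.tgt l = a}.Finite

/-- `Λ` is a finite graph: each `Λ^n` is finite. -/
def FiniteGraph : Prop := ∀ n : Fin r → ℕ, {l : K.Λ | K.deg l = n}.Finite

/-- `Λ` has no sources. -/
def NoSources : Prop :=
  ∀ a : K.Λ, K.IsVertex a → ∀ n : Fin r → ℕ, ∃ l, K.deg l = n ∧ K.tgt l = a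

/-- `Λ` is cofinal. -/
def Cofinal : Prop := ∀ a : K.Λ, K.IsVertex a → ∃ l, K.deg l ≠ 0 ∧ K.tgt l = a

end KGraph

section Families

variable {r : ℕ} (K : KGraph r)
variable {H : Type u} [NormedAddCommGroup H] [InnerProductSpace ℂ H] [CompleteSpace H]

/-- A `Λ`-contraction on a Hilbert space `H`. -/
def IsLambdaContraction (V : K.Λ → H →L[ℂ] H) : Prop :=
  (∀ l m, K.src l ≠ K.tgt m → V l ∘L V m = 0) ∧
  (∀ l m, K.src l = K.tgt m → V l ∘L V m = V (K.comp l m)) ∧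
  (∀ (n : Fin r → ℕ) (F : Finset K.Λ), (∀ l ∈ F, K.deg l = n) →
    ((1 : H →L[ℂ] H) - ∑ l ∈ F, V l ∘L adjoint (V l)).IsPositive) ∧
  (∀ a, K.IsVertex a → IsSelfAdjoint (V a) ∧ V a ∘L V a = V a) ∧
  (∀ ξ : H, HasSum (fun a : {a : K.Λ // K.IsVertex a} => V a.1 ξ) ξ)

/-- A `Λ`-isometry on a Hilbert space `H`. -/
def IsLambdaIsometry (V : K.Λ → H →L[ℂ] H) : Prop :=
  IsLambdaContraction K V ∧
  ∀ (n : Fin r → ℕ) (ξ : H),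
    HasSum (fun l : {l : K.Λ // K.deg l = n} => V l.1 (adjoint (V l.1) ξ)) ξ

/-- `D` is the defect operator `Δ_s(V)` (a strong-operator-topology sum). -/
def IsDefectOperator (V : K.Λ → H →L[ℂ] H) (s : ℝ) (D : H →L[ℂ] H) : Prop :=
  ∀ ξ : H, HasSum
    (fun m : {m : K.Λ // K.deg m ≤ 1} =>
      (((-(s ^ 2)) ^ K.degSum m.1 : ℝ) : ℂ) • V m.1 (adjoint (V m.1) ξ)) (D ξ)

/-- The Popescu condition for a `Λ`-contraction. -/
def PopescuCondition (V : K.Λ → H →L[ℂ] H) : Prop :=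
  ∃ ρ ∈ Set.Ioo (0 : ℝ) 1, ∀ s ∈ Set.Ioo ρ 1,
    ∃ D : H →L[ℂ] H, IsDefectOperator K V s D ∧ D.IsPositive

/-- A Toeplitz-Cuntz-Krieger `Λ`-family. -/
def IsTCKFamily (W : K.Λ → H →L[ℂ] H) : Prop :=
  (∀ l, W l ∘L adjoint (W l) ∘L W l = W l) ∧
  (∀ a, K.IsVertex a → IsSelfAdjoint (W a) ∧ W a ∘L W a = W a) ∧
  (∀ a b, K.IsVertex a → K.IsVertex b → a ≠ b → W a ∘L W b = 0) ∧
  (∀ l m, K.src l = K.tgt m → W l ∘L W m = W (K.comp l m)) ∧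
  (∀ l, adjoint (W l) ∘L W l = W (K.src l)) ∧
  (∀ n : Fin r → ℕ, n ≠ 0 → ∀ a, K.IsVertex a → ∀ F : Finset K.Λ,
    (∀ l ∈ F, K.deg l = n ∧ K.tgt l = a) →
    (W a - ∑ l ∈ F, W l ∘L adjoint (W l)).IsPositive) ∧
  (∀ μ ν : K.Λ, ∀ ξ : H,
    HasSum (fun p : {p : K.Λ × K.Λ // K.MCEPair μ ν p} => W p.1.1 (adjoint (W p.1.2) ξ))
      (adjoint (W μ) (W ν ξ)))

/-- A Cuntz-Pimsner `Λ`-family. -/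
def IsCPFamily (W : K.Λ → H →L[ℂ] H) : Prop :=
  IsTCKFamily K W ∧
  ∀ n : Fin r → ℕ, n ≠ 0 → ∀ a, K.IsVertex a → ∀ ξ : H,
    HasSum (fun l : {l : K.Λ // K.deg l = n ∧ K.tgt l = a} => W l.1 (adjoint (W l.1) ξ))
      (W a ξ)

end Families

section Creation

variable {r : ℕ}

/-- The Fock space `ℓ²(Λ)` of a higher-rank graph. -/
abbrev FockSpace (K : KGraph r) : Type := lp (fun _ : K.Λ => ℂ) 2

/-- `L` is the family of creation operators on `ℓ²(Λ)`:
`L_λ δ_μ = δ_{λμ}` if `s(λ) = r(μ)` and `L_λ δ_μ = 0` otherwise. -/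
def IsCreationFamily (K : KGraph r) [DecidableEq K.Λ]
    (L : K.Λ → FockSpace K →L[ℂ] FockSpace K) : Prop :=
  ∀ l m : K.Λ,
    (K.src l = K.tgt m → L l (lp.single 2 m 1) = lp.single 2 (K.comp l m) 1) ∧
    (K.src l ≠ K.tgt m → L l (lp.single 2 m 1) = 0)

end Creation

section AuxGraph

variable {r : ℕ} {K : KGraph r}

namespace KGraph

lemma isVertex_src (l : K.Λ) : K.IsVertex (K.src l) := K.deg_src l
lemma isVertex_tgt (l : K.Λ) : K.IsVertex (K.tgt l) := K.deg_tgt l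

lemma vertex_eq_of_tgt {a b : K.Λ} (hb : K.deg b = 0) (h : a = K.tgt b) : b = a := by
  rw [h, K.tgt_eq_self b hb]

/-- cancellation of left factors with matching degrees -/
lemma comp_left_cancel {κ β β' : K.Λ} (hdeg : K.deg β = K.deg β')
    (h1 : K.src κ = K.tgt β) (h2 : K.src κ = K.tgt β')
    (hc : K.comp κ β = K.comp κ β') : β = β' := by
  obtain ⟨p, _, hu⟩ := K.factorisation (K.comp κ β) (K.deg κ) (K.deg β)
    (K.deg_comp _ _ h1)
  have e1 := hu (κ, β) ⟨rfl, rfl, h1, rfl⟩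
  have e2 := hu (κ, β') ⟨rfl, hdeg.symm, h2, hc.symm⟩
  have : (κ, β) = ((κ, β') : K.Λ × K.Λ) := e1.trans e2.symm
  exact congrArg Prod.snd this

/-- uniqueness of two-part factorisations with equal degree profiles -/
lemma fac_unique {l β γ β' γ' : K.Λ}
    (hd : K.deg β = K.deg β') (hd2 : K.deg γ = K.deg γ')
    (h1 : K.src β = K.tgt γ) (h2 : K.src β' = K.tgt γ')
    (he : K.comp β γ = l) (he' : K.comp β' γ' = l) : β = β' ∧ γ = γ' := by
  obtain ⟨p, _, hu⟩ := K.factorisation l (K.deg β) (K.deg γ)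
    (by rw [← he, K.deg_comp _ _ h1])
  have e1 := hu (β, γ) ⟨rfl, rfl, h1, he⟩
  have e2 := hu (β', γ') ⟨hd.symm, hd2.symm, h2, he'⟩
  have h := e1.trans e2.symm
  exact ⟨congrArg Prod.fst h, congrArg Prod.snd h⟩

lemma mce_ge {l κ : K.Λ} {m : Fin r → ℕ} (hd : K.deg l = K.deg κ + m) {p : K.Λ × K.Λ}
    (hp : K.MCEPair l κ p) :
    p.1 = K.src l ∧ K.deg p.2 = m ∧ K.src κ = K.tgt p.2 ∧ l = K.comp κ p.2 := by
  obtain ⟨h1, h2, h3, h4⟩ := hp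
  have hsup : K.deg l ⊔ K.deg κ = K.deg l :=
    sup_eq_left.mpr (by rw [hd]; exact le_self_add)
  have hdc : K.deg l + K.deg p.1 = K.deg l := by
    rw [← K.deg_comp _ _ h1, h4, hsup]
  have hp1 : K.deg p.1 = 0 := add_eq_left.mp hdc
  have hp1' : p.1 = K.src l := (K.vertex_eq_of_tgt hp1 h1).symm ▸ rfl
  have hp1'' : p.1 = K.src l := by
    have := K.tgt_eq_self p.1 hp1
    rw [← this, ← h1]
  have hcl : K.comp l p.1 = l := by rw [hp1'', K.comp_src_self]
  have hlc : l = K.comp κ p.2 := by rw [← hcl, h3]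
  refine ⟨hp1'', ?_, h2, hlc⟩
  have := K.deg_comp κ p.2 h2
  rw [← hlc, hd] at this
  exact (add_left_cancel this).symm

lemma mce_ge_mem {l κ β : K.Λ} {m : Fin r → ℕ} (hd : K.deg l = K.deg κ + m)
    (hβd : K.deg β = m) (hβc : K.src κ = K.tgt β) (hβe : l = K.comp κ β) :
    K.MCEPair l κ (K.src l, β) := by
  refine ⟨(K.tgt_eq_self _ (K.deg_src l)).symm, hβc, ?_, ?_⟩
  · rw [K.comp_src_self, hβe]
  · rw [K.comp_src_self]
    exact (sup_eq_left.mpr (by rw [hd, ← hβd]; exact le_self_add)).symm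

end KGraph

end AuxGraph
section AuxTCK

variable {r : ℕ} {K : KGraph r}
variable {E : Type u} [NormedAddCommGroup E] [InnerProductSpace ℂ E] [CompleteSpace E]
variable {W : K.Λ → E →L[ℂ] E}

lemma tck_self_right (hW : IsTCKFamily K W) (l : K.Λ) :
    W l ∘L W (K.src l) = W l := by
  have h1 := hW.1 l
  have h5 := hW.2.2.2.2.1 l
  calc W l ∘L W (K.src l) = W l ∘L (adjoint (W l) ∘L W l) := by rw [h5]
    _ = W l := by rw [← ContinuousLinearMap.comp_assoc]; exact h1

lemma tck_tgt_left (hW : IsTCKFamily K W) (l : K.Λ) :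
    W (K.tgt l) ∘L W l = W l := by
  have := hW.2.2.2.1 (K.tgt l) l (K.src_eq_self _ (K.deg_tgt l))
  rw [this, K.tgt_comp_self]

lemma tck_zero (hW : IsTCKFamily K W) {l m : K.Λ} (h : K.src l ≠ K.tgt m) :
    W l ∘L W m = 0 := by
  have horth := hW.2.2.1 (K.src l) (K.tgt m) (K.isVertex_src l) (K.isVertex_tgt m) h
  calc W l ∘L W m = (W l ∘L W (K.src l)) ∘L (W (K.tgt m) ∘L W m) := by
        rw [tck_self_right hW, tck_tgt_left hW]
    _ = W l ∘L (W (K.src l) ∘L W (K.tgt m)) ∘L W m := by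
        simp only [ContinuousLinearMap.comp_assoc]
    _ = 0 := by rw [horth]; simp

lemma tck_adj_vertex' (hW : IsTCKFamily K W) {a : K.Λ} (ha : K.IsVertex a) :
    adjoint (W a) = W a := by
  rw [← ContinuousLinearMap.star_eq_adjoint]
  exact (hW.2.1 a ha).1

lemma tck_src_adj (hW : IsTCKFamily K W) (l : K.Λ) :
    W (K.src l) ∘L adjoint (W l) = adjoint (W l) := by
  have := congrArg adjoint (tck_self_right hW l)
  rwa [ContinuousLinearMap.adjoint_comp, tck_adj_vertex' hW (K.isVertex_src l)] at this

lemma tck_adj_tgt (hW : IsTCKFamily K W) (l : K.Λ) :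
    adjoint (W l) ∘L W (K.tgt l) = adjoint (W l) := by
  have := congrArg adjoint (tck_tgt_left hW l)
  rwa [ContinuousLinearMap.adjoint_comp, tck_adj_vertex' hW (K.isVertex_tgt l)] at this

/-- `W_l^* W_κ = W_β^*` when `l = κβ`. -/
lemma tck_adj_comp_of_fac (hW : IsTCKFamily K W) {κ l β : K.Λ}
    (hd : K.deg l = K.deg κ + K.deg β) (hβc : K.src κ = K.tgt β) (hβe : l = K.comp κ β) :
    adjoint (W l) ∘L W κ = adjoint (W β) := by
  have hmem : K.MCEPair l κ (K.src l, β) := K.mce_ge_mem hd rfl hβc hβe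
  letI : Unique {p : K.Λ × K.Λ // K.MCEPair l κ p} := by
    refine ⟨⟨⟨(K.src l, β), hmem⟩⟩, ?_⟩
    rintro ⟨p, hp⟩
    obtain ⟨h1, h2, h3, h4⟩ := K.mce_ge hd hp
    have hβ2 : p.2 = β := by
      obtain ⟨q, _, hu⟩ := K.factorisation l (K.deg κ) (K.deg β) hd
      have e1 := hu (κ, p.2) ⟨rfl, h2.trans rfl, h3, h4.symm⟩
      have e2 := hu (κ, β) ⟨rfl, rfl, hβc, hβe.symm⟩
      exact congrArg Prod.snd (e1.trans e2.symm)
    apply Subtype.ext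
    exact Prod.ext h1 hβ2
  ext ζ
  have hs := hW.2.2.2.2.2.2 l κ ζ
  have hfin := hasSum_fintype
    (fun p : {p : K.Λ × K.Λ // K.MCEPair l κ p} => W p.1.1 (adjoint (W p.1.2) ζ))
  have := hs.unique hfin
  simp only [ContinuousLinearMap.comp_apply]
  rw [this, Fintype.sum_unique]
  show W (K.src l) (adjoint (W β) ζ) = adjoint (W β) ζ
  have hsrc : K.src l = K.src β := by rw [hβe, K.src_comp κ β hβc]
  rw [hsrc, ← ContinuousLinearMap.comp_apply, tck_src_adj hW]

/-- `W_l^* W_κ = 0` when `l` does not extend `κ`. -/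
lemma tck_adj_comp_of_nfac (hW : IsTCKFamily K W) {κ l : K.Λ} {m : Fin r → ℕ}
    (hd : K.deg l = K.deg κ + m)
    (h : ∀ β, K.deg β = m → K.src κ = K.tgt β → l ≠ K.comp κ β) :
    adjoint (W l) ∘L W κ = 0 := by
  haveI : IsEmpty {p : K.Λ × K.Λ // K.MCEPair l κ p} := by
    refine ⟨fun p => ?_⟩
    obtain ⟨h1, h2, h3, h4⟩ := K.mce_ge hd p.2
    exact h p.1.2 h2 h3 h4
  ext ζ
  have hs := hW.2.2.2.2.2.2 l κ ζ
  have h0 : (adjoint (W l)) (W κ ζ) = 0 := hs.unique hasSum_empty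
  simpa using h0

/-- same-degree orthogonality: `W_l^* W_κ = 0` for distinct `l, κ` of the same degree -/
lemma tck_adj_same_ne (hW : IsTCKFamily K W) {κ l : K.Λ}
    (hd : K.deg l = K.deg κ) (hne : l ≠ κ) :
    adjoint (W l) ∘L W κ = 0 := by
  refine tck_adj_comp_of_nfac hW (m := 0) (by rw [hd, add_zero]) ?_
  intro β hβ hc
  have : β = K.src κ := K.vertex_eq_of_tgt hβ hc
  rw [this, K.comp_src_self]
  exact hne

end AuxTCK
section AuxSum

set_option linter.unusedSectionVars false

variable {r : ℕ} {K : KGraph r}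

lemma finite_deg (hfin : K.FiniteGraph) (n : Fin r → ℕ) :
    Finite {l : K.Λ // K.deg l = n} := (hfin n).to_subtype

lemma finite_ecomp (hfin : K.FiniteGraph) (a : K.Λ) (m : Fin r → ℕ) :
    Finite {β : K.Λ // K.deg β = m ∧ K.src a = K.tgt β} := by
  haveI := finite_deg hfin m
  refine Finite.of_injective
    (fun β : {β : K.Λ // K.deg β = m ∧ K.src a = K.tgt β} =>
      (⟨β.1, β.2.1⟩ : {l : K.Λ // K.deg l = m})) ?_
  intro x y h
  have h' := congrArg Subtype.val h
  exact Subtype.ext h'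

variable [∀ n : Fin r → ℕ, Fintype {l : K.Λ // K.deg l = n}]
variable [∀ (a : K.Λ) (m : Fin r → ℕ), Fintype {β : K.Λ // K.deg β = m ∧ K.src a = K.tgt β}]

/-- collapse a sum over `Λ^{deg κ + m}` to a sum over extensions of `κ` -/
lemma kg_sum_collapse {κ : K.Λ} {m n : Fin r → ℕ} (hn : n = K.deg κ + m)
    {E : Type*} [AddCommGroup E] (f : {l : K.Λ // K.deg l = n} → E)
    (h0 : ∀ ν : {l : K.Λ // K.deg l = n},
      (∀ β : {β : K.Λ // K.deg β = m ∧ K.src κ = K.tgt β}, ν.1 ≠ K.comp κ β.1) → f ν = 0) :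
    ∑ ν, f ν = ∑ β : {β : K.Λ // K.deg β = m ∧ K.src κ = K.tgt β},
      f ⟨K.comp κ β.1, by rw [hn, K.deg_comp _ _ β.2.2, β.2.1]⟩ := by
  classical
  set e : {β : K.Λ // K.deg β = m ∧ K.src κ = K.tgt β} → {l : K.Λ // K.deg l = n} :=
    fun β => ⟨K.comp κ β.1, by rw [hn, K.deg_comp _ _ β.2.2, β.2.1]⟩ with he
  have hinj : ∀ x ∈ Finset.univ, ∀ y ∈ Finset.univ, e x = e y → x = y := by
    intro x _ y _ h
    have h' := congrArg Subtype.val h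
    exact Subtype.ext (K.comp_left_cancel (x.2.1.trans y.2.1.symm) x.2.2 y.2.2 h')
  rw [← Finset.sum_image (f := f) (g := e) hinj]
  refine (Finset.sum_subset (Finset.subset_univ _) ?_).symm
  intro x _ hx
  refine h0 x (fun β hβ => hx ?_)
  rw [Finset.mem_image]
  exact ⟨β, Finset.mem_univ β, Subtype.ext hβ.symm⟩

/-- collapse a sum over `Λ^m` to the composable part -/
lemma kg_sum_collapse0 {b : K.Λ} {m : Fin r → ℕ}
    {E : Type*} [AddCommGroup E] (f : {l : K.Λ // K.deg l = m} → E)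
    (h0 : ∀ γ : {l : K.Λ // K.deg l = m}, K.src b ≠ K.tgt γ.1 → f γ = 0) :
    ∑ γ, f γ = ∑ γ : {β : K.Λ // K.deg β = m ∧ K.src b = K.tgt β}, f ⟨γ.1, γ.2.1⟩ := by
  classical
  set e : {β : K.Λ // K.deg β = m ∧ K.src b = K.tgt β} → {l : K.Λ // K.deg l = m} :=
    fun β => ⟨β.1, β.2.1⟩ with he
  have hinj : ∀ x ∈ Finset.univ, ∀ y ∈ Finset.univ, e x = e y → x = y := by
    intro x _ y _ h
    have h' := congrArg Subtype.val h
    exact Subtype.ext h'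
  rw [← Finset.sum_image (f := f) (g := e) hinj]
  refine (Finset.sum_subset (Finset.subset_univ _) ?_).symm
  intro x _ hx
  refine h0 x (fun hc => hx ?_)
  rw [Finset.mem_image]
  exact ⟨⟨x.1, x.2, hc⟩, Finset.mem_univ _, rfl⟩

/-- helper extensionality for dependent pairs of extensions -/
lemma sigma_ext {κ : K.Λ} {m₁ m₂ : Fin r → ℕ}
    {x y : Σ β : {β : K.Λ // K.deg β = m₁ ∧ K.src κ = K.tgt β},
      {γ : K.Λ // K.deg γ = m₂ ∧ K.src β.1 = K.tgt γ}}
    (h1 : x.1.1 = y.1.1) (h2 : x.2.1 = y.2.1) : x = y := by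
  obtain ⟨⟨b, hb⟩, ⟨g, hg⟩⟩ := x
  obtain ⟨⟨b', hb'⟩, ⟨g', hg'⟩⟩ := y
  dsimp at h1 h2
  subst h1; subst h2; rfl

/-- decomposition of extensions of `κ` of degree `m₁ + m₂` into two-step extensions -/
def ecompEquiv (κ : K.Λ) (m₁ m₂ : Fin r → ℕ) :
    {B : K.Λ // K.deg B = m₁ + m₂ ∧ K.src κ = K.tgt B} ≃
    Σ β : {β : K.Λ // K.deg β = m₁ ∧ K.src κ = K.tgt β},
      {γ : K.Λ // K.deg γ = m₂ ∧ K.src β.1 = K.tgt γ} := by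
  have hinv : Function.Injective
      (fun p : (Σ β : {β : K.Λ // K.deg β = m₁ ∧ K.src κ = K.tgt β},
        {γ : K.Λ // K.deg γ = m₂ ∧ K.src β.1 = K.tgt γ}) =>
        (⟨K.comp p.1.1 p.2.1,
          (K.deg_comp _ _ p.2.2.2).trans (by rw [p.1.2.1, p.2.2.1]),
          (K.tgt_comp _ _ p.2.2.2) ▸ p.1.2.2⟩ :
          {B : K.Λ // K.deg B = m₁ + m₂ ∧ K.src κ = K.tgt B})) := by
    intro p q h
    have h' := congrArg Subtype.val h
    have := K.fac_unique (p.1.2.1.trans q.1.2.1.symm) (p.2.2.1.trans q.2.2.1.symm)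
      p.2.2.2 q.2.2.2 h' rfl
    exact sigma_ext this.1 this.2
  refine Equiv.mk ?_ (fun p => ⟨K.comp p.1.1 p.2.1,
      (K.deg_comp _ _ p.2.2.2).trans (by rw [p.1.2.1, p.2.2.1]),
      (K.tgt_comp _ _ p.2.2.2) ▸ p.1.2.2⟩) ?_ ?_
  · intro B
    have hfac := K.factorisation B.1 m₁ m₂ B.2.1
    refine ⟨⟨hfac.choose.1, hfac.choose_spec.1.1, ?_⟩,
      ⟨hfac.choose.2, hfac.choose_spec.1.2.1, hfac.choose_spec.1.2.2.1⟩⟩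
    exact B.2.2.trans ((congrArg K.tgt hfac.choose_spec.1.2.2.2).symm.trans
      (K.tgt_comp _ _ hfac.choose_spec.1.2.2.1))
  · intro B
    apply Subtype.ext
    exact (K.factorisation B.1 m₁ m₂ B.2.1).choose_spec.1.2.2.2
  · intro p
    apply hinv
    apply Subtype.ext
    exact (K.factorisation (K.comp p.1.1 p.2.1) m₁ m₂
      ((K.deg_comp _ _ p.2.2.2).trans (by rw [p.1.2.1, p.2.2.1]))).choose_spec.1.2.2.2

end AuxSum
section AuxDil

set_option linter.unusedSectionVars false

variable {r : ℕ} {K : KGraph r}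
variable {A : Type u} [NormedAddCommGroup A] [InnerProductSpace ℂ A] [CompleteSpace A]
variable {B : Type u} [NormedAddCommGroup B] [InnerProductSpace ℂ B] [CompleteSpace B]

local notation "⟪" x ", " y "⟫" => @inner ℂ _ _ x y

lemma adjoint_zero_endo : adjoint (0 : B →L[ℂ] B) = 0 := by
  rw [← ContinuousLinearMap.star_eq_adjoint]; exact star_zero _

lemma inner_self_complex (x : B) : @inner ℂ _ _ x x = ((‖x‖ ^ 2 : ℝ) : ℂ) := by
  rw [@inner_self_eq_norm_sq_to_K ℂ]; norm_cast

lemma iota_adj_iota (ι : A →ₗᵢ[ℂ] B) (ξ : A) :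
    adjoint ι.toContinuousLinearMap (ι ξ) = ξ := by
  apply ext_inner_right ℂ
  intro v
  rw [adjoint_inner_left]
  exact ι.inner_map_map ξ v

lemma iota_adj_norm_le (ι : A →ₗᵢ[ℂ] B) (x : B) :
    ‖adjoint ι.toContinuousLinearMap x‖ ≤ ‖x‖ := by
  have h1 : ‖ι.toContinuousLinearMap‖ ≤ 1 :=
    ContinuousLinearMap.opNorm_le_bound _ zero_le_one
      (fun ξ => by rw [ι.coe_toContinuousLinearMap, ι.norm_map, one_mul])
  calc ‖adjoint ι.toContinuousLinearMap x‖
      ≤ ‖adjoint ι.toContinuousLinearMap‖ * ‖x‖ := ContinuousLinearMap.le_opNorm _ x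
    _ ≤ 1 * ‖x‖ := by
        apply mul_le_mul_of_nonneg_right _ (norm_nonneg x)
        rw [LinearIsometryEquiv.norm_map (ContinuousLinearMap.adjoint (𝕜 := ℂ))] at *
        exact h1
    _ = ‖x‖ := one_mul _

variable {V : K.Λ → A →L[ℂ] A} {W : K.Λ → B →L[ℂ] B} {ι : A →ₗᵢ[ℂ] B}

/-- operator form of the dilation property -/
lemma dil_op (hdil : ∀ (l : K.Λ) (ξ : A), adjoint (W l) (ι ξ) = ι (adjoint (V l) ξ))
    (l : K.Λ) : adjoint (W l) ∘L ι.toContinuousLinearMap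
      = ι.toContinuousLinearMap ∘L adjoint (V l) := by
  ext ξ; exact hdil l ξ

/-- `ι* W_l = V_l ι*` -/
lemma dil_adj (hdil : ∀ (l : K.Λ) (ξ : A), adjoint (W l) (ι ξ) = ι (adjoint (V l) ξ))
    (l : K.Λ) : adjoint ι.toContinuousLinearMap ∘L W l
      = V l ∘L adjoint ι.toContinuousLinearMap := by
  have := congrArg adjoint (dil_op hdil l)
  rwa [adjoint_comp, adjoint_comp, adjoint_adjoint, adjoint_adjoint] at this

/-- `W_a ι = ι V_a` for vertices -/
lemma dil_vertex (hW : IsTCKFamily K W) (hV : IsLambdaContraction K V)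
    (hdil : ∀ (l : K.Λ) (ξ : A), adjoint (W l) (ι ξ) = ι (adjoint (V l) ξ))
    {a : K.Λ} (ha : K.IsVertex a) (ξ : A) : W a (ι ξ) = ι (V a ξ) := by
  have h1 : W a (ι ξ) = adjoint (W a) (ι ξ) := by rw [tck_adj_vertex' hW ha]
  have h2 : adjoint (V a) = V a := by
    rw [← ContinuousLinearMap.star_eq_adjoint]
    exact (hV.2.2.2.1 a ha).1
  rw [h1, hdil, h2]

/-- selfadjoint idempotents are contractive -/
lemma proj_norm_le {p : B →L[ℂ] B} (hsa : adjoint p = p) (hid : p ∘L p = p) (x : B) :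
    ‖p x‖ ≤ ‖x‖ := by
  by_cases h0 : ‖p x‖ = 0
  · rw [h0]; exact norm_nonneg x
  have h1 : ⟪p x, p x⟫ = ⟪p x, x⟫ := by
    calc ⟪p x, p x⟫ = ⟪adjoint p (p x), x⟫ := (adjoint_inner_left p x (p x)).symm
      _ = ⟪p (p x), x⟫ := by rw [hsa]
      _ = ⟪(p ∘L p) x, x⟫ := rfl
      _ = ⟪p x, x⟫ := by rw [hid]
  have h2 : (‖p x‖ : ℝ) ^ 2 = ‖⟪p x, x⟫‖ := by
    rw [← h1, inner_self_complex]
    rw [Complex.norm_real]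
    exact (abs_of_nonneg (by positivity)).symm
  have h3 : ‖⟪p x, x⟫‖ ≤ ‖p x‖ * ‖x‖ := norm_inner_le_norm _ _
  have h4 : ‖p x‖ * ‖p x‖ ≤ ‖p x‖ * ‖x‖ := by rw [← pow_two, h2]; exact h3
  exact le_of_mul_le_mul_left (by linarith) (lt_of_le_of_ne (norm_nonneg _) (Ne.symm h0))

/-- `⟪p x, x⟫ = ‖p x‖²` for selfadjoint idempotents -/
lemma proj_inner {p : B →L[ℂ] B} (hsa : adjoint p = p) (hid : p ∘L p = p) (x : B) :
    ⟪p x, x⟫ = ((‖p x‖ ^ 2 : ℝ) : ℂ) := by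
  have h1 : ⟪p x, x⟫ = ⟪p x, p x⟫ := by
    calc ⟪p x, x⟫ = ⟪(p ∘L p) x, x⟫ := by rw [hid]
      _ = ⟪p (p x), x⟫ := rfl
      _ = ⟪adjoint p (p x), x⟫ := by rw [hsa]
      _ = ⟪p x, p x⟫ := adjoint_inner_left p x (p x)
  rw [h1, inner_self_complex]

variable [∀ n : Fin r → ℕ, Fintype {l : K.Λ // K.deg l = n}]

/-- finite resolution of the identity for a `Λ`-isometry -/
lemma iso_resolution (hWiso : IsLambdaIsometry K W) (n : Fin r → ℕ) (ζ : B) :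
    ∑ l : {l : K.Λ // K.deg l = n}, W l.1 (adjoint (W l.1) ζ) = ζ :=
  ((hWiso.2 n ζ).unique (hasSum_fintype _)).symm

end AuxDil
section Main

set_option linter.unusedSectionVars false

variable {r : ℕ} {K : KGraph r}
variable {H : Type u} [NormedAddCommGroup H] [InnerProductSpace ℂ H] [CompleteSpace H]
variable {H' : Type u} [NormedAddCommGroup H'] [InnerProductSpace ℂ H'] [CompleteSpace H']
variable {K₁ : Type u} [NormedAddCommGroup K₁] [InnerProductSpace ℂ K₁] [CompleteSpace K₁]
variable {K₂ : Type u} [NormedAddCommGroup K₂] [InnerProductSpace ℂ K₂] [CompleteSpace K₂]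
variable [∀ n : Fin r → ℕ, Fintype {l : K.Λ // K.deg l = n}]
variable [∀ (a : K.Λ) (m : Fin r → ℕ), Fintype {β : K.Λ // K.deg β = m ∧ K.src a = K.tgt β}]

local notation "⟪" x ", " y "⟫" => @inner ℂ _ _ x y

/-- covariance of `X` -/
def CovariantOp (V : K.Λ → H →L[ℂ] H) (V' : K.Λ → H' →L[ℂ] H') (X : H →L[ℂ] H') : Prop :=
  ∀ (n : Fin r → ℕ) (ξ : H),
    ∑ l : {l : K.Λ // K.deg l = n}, V' l.1 (X (adjoint (V l.1) ξ)) = X ξ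

/-- the approximating operators -/
def approxOp (ι : H →ₗᵢ[ℂ] K₁) (W : K.Λ → K₁ →L[ℂ] K₁) (ι' : H' →ₗᵢ[ℂ] K₂)
    (W' : K.Λ → K₂ →L[ℂ] K₂) (X : H →L[ℂ] H') (n : Fin r → ℕ) : K₁ →L[ℂ] K₂ :=
  ∑ l : {l : K.Λ // K.deg l = n},
    W' l.1 ∘L ι'.toContinuousLinearMap ∘L X ∘L adjoint ι.toContinuousLinearMap
      ∘L adjoint (W l.1)

variable {V : K.Λ → H →L[ℂ] H} {V' : K.Λ → H' →L[ℂ] H'}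
variable {ι : H →ₗᵢ[ℂ] K₁} {W : K.Λ → K₁ →L[ℂ] K₁}
variable {ι' : H' →ₗᵢ[ℂ] K₂} {W' : K.Λ → K₂ →L[ℂ] K₂}

lemma approxOp_apply (X : H →L[ℂ] H') (n : Fin r → ℕ) (ζ : K₁) :
    approxOp ι W ι' W' X n ζ = ∑ l : {l : K.Λ // K.deg l = n},
      W' l.1 (ι' (X (adjoint ι.toContinuousLinearMap (adjoint (W l.1) ζ)))) := by
  rw [approxOp, ContinuousLinearMap.sum_apply]
  rfl

lemma cov_vertex_fix {X : H →L[ℂ] H'} (hV : IsLambdaContraction K V)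
    (hX : CovariantOp V V' X) (β : K.Λ) (ξ : H) :
    V' (K.src β) (X (adjoint (V β) ξ)) = X (adjoint (V β) ξ) := by
  have h := hX 0 (adjoint (V β) ξ)
  have hsum : ∑ l : {l : K.Λ // K.deg l = 0}, V' l.1 (X (adjoint (V l.1) (adjoint (V β) ξ)))
      = V' (K.src β) (X (adjoint (V β) ξ)) := by
    rw [Finset.sum_eq_single_of_mem (⟨K.src β, K.deg_src β⟩ : {l : K.Λ // K.deg l = 0})
      (Finset.mem_univ _)]
    · have hcomp : V β ∘L V (K.src β) = V β := by
        have := hV.2.1 β (K.src β) (K.tgt_eq_self _ (K.deg_src β)).symm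
        rw [this, K.comp_src_self]
      have h2 : adjoint (V (K.src β)) (adjoint (V β) ξ)
          = adjoint (V β ∘L V (K.src β)) ξ := by rw [adjoint_comp]; rfl
      show V' (K.src β) (X (adjoint (V (K.src β)) (adjoint (V β) ξ)))
        = V' (K.src β) (X (adjoint (V β) ξ))
      rw [h2, hcomp]
    · intro l _ hl
      have hne : K.src β ≠ K.tgt l.1 := by
        rw [K.tgt_eq_self l.1 l.2]
        intro hc
        exact hl (Subtype.ext hc.symm)
      have hzero := hV.1 β l.1 hne
      have h2 : adjoint (V l.1) (adjoint (V β) ξ) = adjoint (V β ∘L V l.1) ξ := by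
        rw [adjoint_comp]; rfl
      rw [h2, hzero]
      simp
  exact hsum.symm.trans h

lemma sum_inner_ortho (hW' : IsTCKFamily K W') {I : Type*} [Fintype I] {n : Fin r → ℕ}
    (ν : I → K.Λ) (hdeg : ∀ i, K.deg (ν i) = n) (hinj : Function.Injective ν)
    (u v : I → K₂) :
    ⟪∑ i, W' (ν i) (u i), ∑ i, W' (ν i) (v i)⟫
      = ∑ i, ⟪W' (K.src (ν i)) (u i), v i⟫ := by
  rw [sum_inner]
  refine Finset.sum_congr rfl (fun i _ => ?_)
  rw [inner_sum]
  rw [Finset.sum_eq_single_of_mem i (Finset.mem_univ i)]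
  · have h2 : ⟪W' (ν i) (u i), W' (ν i) (v i)⟫
        = ⟪(adjoint (W' (ν i)) ∘L W' (ν i)) (u i), v i⟫ := by
      rw [ContinuousLinearMap.comp_apply, adjoint_inner_left]
    rw [h2, hW'.2.2.2.2.1 (ν i)]
  · intro j _ hj
    have h2 : ⟪W' (ν i) (u i), W' (ν j) (v j)⟫
        = ⟪(adjoint (W' (ν j)) ∘L W' (ν i)) (u i), v j⟫ := by
      rw [ContinuousLinearMap.comp_apply, adjoint_inner_left]
    rw [h2, tck_adj_same_ne hW' ((hdeg j).trans (hdeg i).symm)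
      (fun hc => hj (hinj hc))]
    simp

lemma sum_norm_sq_adj (hWiso : IsLambdaIsometry K W) (n : Fin r → ℕ) (ζ : K₁) :
    ∑ l : {l : K.Λ // K.deg l = n}, (‖adjoint (W l.1) ζ‖ : ℝ) ^ 2 = ‖ζ‖ ^ 2 := by
  have key : ∀ l : {l : K.Λ // K.deg l = n},
      (((‖adjoint (W l.1) ζ‖ ^ 2 : ℝ)) : ℂ) = ⟪ζ, W l.1 (adjoint (W l.1) ζ)⟫ := by
    intro l
    rw [← inner_self_complex]
    exact adjoint_inner_left (W l.1) (adjoint (W l.1) ζ) ζ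
  have h2 : ((∑ l : {l : K.Λ // K.deg l = n}, (‖adjoint (W l.1) ζ‖ : ℝ) ^ 2 : ℝ) : ℂ)
      = ((‖ζ‖ ^ 2 : ℝ) : ℂ) := by
    rw [Complex.ofReal_sum]
    rw [Finset.sum_congr rfl (fun l _ => key l), ← inner_sum, iso_resolution hWiso n ζ,
      inner_self_complex]
  exact_mod_cast h2

lemma approxOp_norm_le (hW' : IsTCKFamily K W') (hWiso : IsLambdaIsometry K W)
    (X : H →L[ℂ] H') (n : Fin r → ℕ) (ζ : K₁) :
    ‖approxOp ι W ι' W' X n ζ‖ ≤ ‖X‖ * ‖ζ‖ := by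
  set u : {l : K.Λ // K.deg l = n} → K₂ :=
    fun l => ι' (X (adjoint ι.toContinuousLinearMap (adjoint (W l.1) ζ))) with hu
  have hT : approxOp ι W ι' W' X n ζ = ∑ l, W' l.1 (u l) := approxOp_apply X n ζ
  have horto := sum_inner_ortho hW' (fun l : {l : K.Λ // K.deg l = n} => l.1)
    (fun l => l.2) Subtype.val_injective u
  have hsq : (‖approxOp ι W ι' W' X n ζ‖ : ℝ) ^ 2
      = ∑ l : {l : K.Λ // K.deg l = n}, ‖W' (K.src l.1) (u l)‖ ^ 2 := by
    have hc : ((∑ l : {l : K.Λ // K.deg l = n}, ‖W' (K.src l.1) (u l)‖ ^ 2 : ℝ) : ℂ)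
        = ∑ l : {l : K.Λ // K.deg l = n}, (((‖W' (K.src l.1) (u l)‖ ^ 2 : ℝ)) : ℂ) :=
      Complex.ofReal_sum _ _
    have h1 : (((‖approxOp ι W ι' W' X n ζ‖ ^ 2 : ℝ)) : ℂ)
        = ∑ l : {l : K.Λ // K.deg l = n}, (((‖W' (K.src l.1) (u l)‖ ^ 2 : ℝ)) : ℂ) := by
      rw [← inner_self_complex, hT, horto]
      refine Finset.sum_congr rfl (fun l _ => ?_)
      rw [proj_inner (tck_adj_vertex' hW' (K.isVertex_src l.1)) (hW'.2.1 _ (K.isVertex_src l.1)).2]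
    have := h1.trans hc.symm
    exact_mod_cast this
  have hterm : ∀ l : {l : K.Λ // K.deg l = n},
      ‖W' (K.src l.1) (u l)‖ ^ 2 ≤ ‖X‖ ^ 2 * ‖adjoint (W l.1) ζ‖ ^ 2 := by
    intro l
    have b1 : ‖W' (K.src l.1) (u l)‖ ≤ ‖u l‖ :=
      proj_norm_le (tck_adj_vertex' hW' (K.isVertex_src l.1)) (hW'.2.1 _ (K.isVertex_src l.1)).2 _
    have b2 : ‖u l‖ ≤ ‖X‖ * ‖adjoint (W l.1) ζ‖ := by
      rw [hu]
      calc ‖ι' (X (adjoint ι.toContinuousLinearMap (adjoint (W l.1) ζ)))‖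
          = ‖X (adjoint ι.toContinuousLinearMap (adjoint (W l.1) ζ))‖ := ι'.norm_map _
        _ ≤ ‖X‖ * ‖adjoint ι.toContinuousLinearMap (adjoint (W l.1) ζ)‖ :=
            ContinuousLinearMap.le_opNorm _ _
        _ ≤ ‖X‖ * ‖adjoint (W l.1) ζ‖ := by
            exact mul_le_mul_of_nonneg_left (iota_adj_norm_le ι _) (norm_nonneg X)
    calc ‖W' (K.src l.1) (u l)‖ ^ 2 ≤ (‖X‖ * ‖adjoint (W l.1) ζ‖) ^ 2 := by
          apply pow_le_pow_left₀ (norm_nonneg _) (b1.trans b2)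
      _ = ‖X‖ ^ 2 * ‖adjoint (W l.1) ζ‖ ^ 2 := by ring
  have hfin : (‖approxOp ι W ι' W' X n ζ‖ : ℝ) ^ 2 ≤ (‖X‖ * ‖ζ‖) ^ 2 := by
    rw [hsq]
    calc ∑ l : {l : K.Λ // K.deg l = n}, ‖W' (K.src l.1) (u l)‖ ^ 2
        ≤ ∑ l : {l : K.Λ // K.deg l = n}, ‖X‖ ^ 2 * ‖adjoint (W l.1) ζ‖ ^ 2 :=
          Finset.sum_le_sum (fun l _ => hterm l)
      _ = ‖X‖ ^ 2 * ∑ l : {l : K.Λ // K.deg l = n}, ‖adjoint (W l.1) ζ‖ ^ 2 := by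
          rw [Finset.mul_sum]
      _ = ‖X‖ ^ 2 * ‖ζ‖ ^ 2 := by rw [sum_norm_sq_adj hWiso]
      _ = (‖X‖ * ‖ζ‖) ^ 2 := by ring
  have := Real.sqrt_le_sqrt hfin
  rwa [Real.sqrt_sq (norm_nonneg _), Real.sqrt_sq (by positivity)] at this

end Main
section Main2

set_option linter.unusedSectionVars false

variable {r : ℕ} {K : KGraph r}
variable {H : Type u} [NormedAddCommGroup H] [InnerProductSpace ℂ H] [CompleteSpace H]
variable {H' : Type u} [NormedAddCommGroup H'] [InnerProductSpace ℂ H'] [CompleteSpace H']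
variable {K₁ : Type u} [NormedAddCommGroup K₁] [InnerProductSpace ℂ K₁] [CompleteSpace K₁]
variable {K₂ : Type u} [NormedAddCommGroup K₂] [InnerProductSpace ℂ K₂] [CompleteSpace K₂]
variable [∀ n : Fin r → ℕ, Fintype {l : K.Λ // K.deg l = n}]
variable [∀ (a : K.Λ) (m : Fin r → ℕ), Fintype {β : K.Λ // K.deg β = m ∧ K.src a = K.tgt β}]
variable {V : K.Λ → H →L[ℂ] H} {V' : K.Λ → H' →L[ℂ] H'}
variable {ι : H →ₗᵢ[ℂ] K₁} {W : K.Λ → K₁ →L[ℂ] K₁}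
variable {ι' : H' →ₗᵢ[ℂ] K₂} {W' : K.Λ → K₂ →L[ℂ] K₂}

local notation "⟪" x ", " y "⟫" => @inner ℂ _ _ x y

/-- formula for `approxOp` on generators -/
lemma approxOp_gen (hWt : IsTCKFamily K W)
    (hdil : ∀ (l : K.Λ) (ξ : H), adjoint (W l) (ι ξ) = ι (adjoint (V l) ξ))
    (X : H →L[ℂ] H') (κ : K.Λ) (m : Fin r → ℕ) (ξ : H) :
    approxOp ι W ι' W' X (K.deg κ + m) (W κ (ι ξ))
      = ∑ β : {β : K.Λ // K.deg β = m ∧ K.src κ = K.tgt β},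
          W' (K.comp κ β.1) (ι' (X (adjoint (V β.1) ξ))) := by
  rw [approxOp_apply]
  rw [kg_sum_collapse (rfl : K.deg κ + m = K.deg κ + m)]
  · refine Finset.sum_congr rfl (fun β _ => ?_)
    have hfac : adjoint (W (K.comp κ β.1)) ∘L W κ = adjoint (W β.1) :=
      tck_adj_comp_of_fac hWt (by rw [K.deg_comp _ _ β.2.2, β.2.1]) β.2.2 rfl
    have h1 : adjoint (W (K.comp κ β.1)) (W κ (ι ξ)) = adjoint (W β.1) (ι ξ) := by
      rw [← ContinuousLinearMap.comp_apply, hfac]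
    rw [h1, hdil, iota_adj_iota]
  · intro ν hν
    have h0 : adjoint (W ν.1) ∘L W κ = 0 :=
      tck_adj_comp_of_nfac hWt ν.2 (fun β hβd hβc hβe => hν ⟨β, hβd, hβc⟩ hβe)
    have h1 : adjoint (W ν.1) (W κ (ι ξ)) = 0 := by
      rw [← ContinuousLinearMap.comp_apply, h0]; rfl
    rw [h1]
    simp

/-- intertwining relation for the approximating operators -/
lemma approxOp_intertwine (hWt : IsTCKFamily K W) (hW't : IsTCKFamily K W')
    (X : H →L[ℂ] H') (l : K.Λ) (n : Fin r → ℕ) (ζ : K₁) :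
    W' l (approxOp ι W ι' W' X n ζ) = approxOp ι W ι' W' X (K.deg l + n) (W l ζ) := by
  have hlhs : W' l (approxOp ι W ι' W' X n ζ)
      = ∑ β : {β : K.Λ // K.deg β = n ∧ K.src l = K.tgt β},
          W' (K.comp l β.1) (ι' (X (adjoint ι.toContinuousLinearMap (adjoint (W β.1) ζ)))) := by
    rw [approxOp_apply, map_sum]
    rw [kg_sum_collapse0 (b := l)
      (f := fun μ : {μ : K.Λ // K.deg μ = n} => W' l (W' μ.1
        (ι' (X (adjoint ι.toContinuousLinearMap (adjoint (W μ.1) ζ))))))]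
    · refine Finset.sum_congr rfl (fun β _ => ?_)
      have : W' l ∘L W' β.1 = W' (K.comp l β.1) := hW't.2.2.2.1 l β.1 β.2.2
      rw [← ContinuousLinearMap.comp_apply, this]
    · intro γ hc
      have : W' l ∘L W' γ.1 = 0 := tck_zero hW't hc
      rw [← ContinuousLinearMap.comp_apply, this]
      rfl
  have hrhs : approxOp ι W ι' W' X (K.deg l + n) (W l ζ)
      = ∑ β : {β : K.Λ // K.deg β = n ∧ K.src l = K.tgt β},
          W' (K.comp l β.1) (ι' (X (adjoint ι.toContinuousLinearMap (adjoint (W β.1) ζ)))) := by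
    rw [approxOp_apply]
    rw [kg_sum_collapse (rfl : K.deg l + n = K.deg l + n)]
    · refine Finset.sum_congr rfl (fun β _ => ?_)
      have hfac : adjoint (W (K.comp l β.1)) ∘L W l = adjoint (W β.1) :=
        tck_adj_comp_of_fac hWt (by rw [K.deg_comp _ _ β.2.2, β.2.1]) β.2.2 rfl
      have h1 : adjoint (W (K.comp l β.1)) (W l ζ) = adjoint (W β.1) ζ := by
        rw [← ContinuousLinearMap.comp_apply, hfac]
      rw [h1]
    · intro ν hν
      have h0 : adjoint (W ν.1) ∘L W l = 0 :=
        tck_adj_comp_of_nfac hWt ν.2 (fun β hβd hβc hβe => hν ⟨β, hβd, hβc⟩ hβe)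
      have h1 : adjoint (W ν.1) (W l ζ) = 0 := by
        rw [← ContinuousLinearMap.comp_apply, h0]; rfl
      rw [h1]
      simp
  rw [hlhs, hrhs]

/-- compression of the approximating operators -/
lemma approxOp_compress {X : H →L[ℂ] H'}
    (hdil : ∀ (l : K.Λ) (ξ : H), adjoint (W l) (ι ξ) = ι (adjoint (V l) ξ))
    (hdil' : ∀ (l : K.Λ) (ξ : H'), adjoint (W' l) (ι' ξ) = ι' (adjoint (V' l) ξ))
    (hWiso : IsLambdaIsometry K W) (hX : CovariantOp V V' X) (n : Fin r → ℕ) (ξ : H) :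
    adjoint ι'.toContinuousLinearMap (approxOp ι W ι' W' X n (ι ξ)) = X ξ := by
  rw [approxOp_apply, map_sum]
  have hterm : ∀ l : {l : K.Λ // K.deg l = n},
      adjoint ι'.toContinuousLinearMap
        (W' l.1 (ι' (X (adjoint ι.toContinuousLinearMap (adjoint (W l.1) (ι ξ))))))
      = V' l.1 (X (adjoint (V l.1) ξ)) := by
    intro l
    rw [hdil, iota_adj_iota]
    have h1 : adjoint ι'.toContinuousLinearMap (W' l.1 (ι' (X (adjoint (V l.1) ξ))))
        = V' l.1 (adjoint ι'.toContinuousLinearMap (ι' (X (adjoint (V l.1) ξ)))) := by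
      rw [← ContinuousLinearMap.comp_apply, dil_adj hdil' l.1]
      rfl
    rw [h1, iota_adj_iota]
  rw [Finset.sum_congr rfl (fun l _ => hterm l)]
  exact hX n ξ

/-- resolution of an intertwiner -/
lemma intertwiner_resolution (hWiso : IsLambdaIsometry K W) {U : K₁ →L[ℂ] K₂}
    (hU : ∀ l : K.Λ, U ∘L W l = W' l ∘L U) (n : Fin r → ℕ) (ζ : K₁) :
    ∑ l : {l : K.Λ // K.deg l = n}, W' l.1 (U (adjoint (W l.1) ζ)) = U ζ := by
  have hterm : ∀ l : {l : K.Λ // K.deg l = n},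
      W' l.1 (U (adjoint (W l.1) ζ)) = U (W l.1 (adjoint (W l.1) ζ)) := by
    intro l
    rw [← ContinuousLinearMap.comp_apply, ← hU l.1]
    rfl
  rw [Finset.sum_congr rfl (fun l _ => hterm l), ← map_sum, iso_resolution hWiso]

/-- the compression of an intertwiner is covariant -/
lemma compress_covariant (hWiso : IsLambdaIsometry K W)
    (hdil : ∀ (l : K.Λ) (ξ : H), adjoint (W l) (ι ξ) = ι (adjoint (V l) ξ))
    (hdil' : ∀ (l : K.Λ) (ξ : H'), adjoint (W' l) (ι' ξ) = ι' (adjoint (V' l) ξ))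
    {U : K₁ →L[ℂ] K₂} (hU : ∀ l : K.Λ, U ∘L W l = W' l ∘L U) :
    CovariantOp V V' (adjoint ι'.toContinuousLinearMap ∘L (U ∘L ι.toContinuousLinearMap)) := by
  intro n ξ
  have hterm : ∀ l : {l : K.Λ // K.deg l = n},
      V' l.1 ((adjoint ι'.toContinuousLinearMap ∘L (U ∘L ι.toContinuousLinearMap))
        (adjoint (V l.1) ξ))
      = adjoint ι'.toContinuousLinearMap (W' l.1 (U (adjoint (W l.1) (ι ξ)))) := by
    intro l
    have h1 : (adjoint ι'.toContinuousLinearMap ∘L (U ∘L ι.toContinuousLinearMap))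
        (adjoint (V l.1) ξ) = adjoint ι'.toContinuousLinearMap (U (ι (adjoint (V l.1) ξ))) := rfl
    rw [h1, ← hdil l.1]
    rw [← ContinuousLinearMap.comp_apply (V' l.1), ← dil_adj hdil' l.1]
    rfl
  rw [Finset.sum_congr rfl (fun l _ => hterm l), ← map_sum,
    intertwiner_resolution hWiso hU]
  rfl

end Main2
section Main3

set_option linter.unusedSectionVars false

variable {r : ℕ} {K : KGraph r}
variable {H : Type u} [NormedAddCommGroup H] [InnerProductSpace ℂ H] [CompleteSpace H]
variable {H' : Type u} [NormedAddCommGroup H'] [InnerProductSpace ℂ H'] [CompleteSpace H']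
variable {K₁ : Type u} [NormedAddCommGroup K₁] [InnerProductSpace ℂ K₁] [CompleteSpace K₁]
variable {K₂ : Type u} [NormedAddCommGroup K₂] [InnerProductSpace ℂ K₂] [CompleteSpace K₂]
variable [∀ n : Fin r → ℕ, Fintype {l : K.Λ // K.deg l = n}]
variable [∀ (a : K.Λ) (m : Fin r → ℕ), Fintype {β : K.Λ // K.deg β = m ∧ K.src a = K.tgt β}]
variable {V : K.Λ → H →L[ℂ] H} {V' : K.Λ → H' →L[ℂ] H'}
variable {ι : H →ₗᵢ[ℂ] K₁} {W : K.Λ → K₁ →L[ℂ] K₁}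
variable {ι' : H' →ₗᵢ[ℂ] K₂} {W' : K.Λ → K₂ →L[ℂ] K₂}

local notation "⟪" x ", " y "⟫" => @inner ℂ _ _ x y

/-- the square sums controlling the generator approximations -/
def cfun (V : K.Λ → H →L[ℂ] H) (X : H →L[ℂ] H') (κ : K.Λ) (ξ : H) (m : Fin r → ℕ) : ℝ :=
  ∑ β : {β : K.Λ // K.deg β = m ∧ K.src κ = K.tgt β}, ‖X (adjoint (V β.1) ξ)‖ ^ 2

/-- the generator approximation vectors -/
def Sgen (V : K.Λ → H →L[ℂ] H) (ι' : H' →ₗᵢ[ℂ] K₂) (W' : K.Λ → K₂ →L[ℂ] K₂)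
    (X : H →L[ℂ] H') (κ : K.Λ) (ξ : H) (m : Fin r → ℕ) : K₂ :=
  ∑ β : {β : K.Λ // K.deg β = m ∧ K.src κ = K.tgt β},
    W' (K.comp κ β.1) (ι' (X (adjoint (V β.1) ξ)))

lemma Sgen_inj (κ : K.Λ) (m : Fin r → ℕ) : Function.Injective
    (fun β : {β : K.Λ // K.deg β = m ∧ K.src κ = K.tgt β} => K.comp κ β.1) := by
  intro x y h
  exact Subtype.ext (K.comp_left_cancel (x.2.1.trans y.2.1.symm) x.2.2 y.2.2 h)

/-- `‖S(m)‖² = c(m)` -/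
lemma Sgen_norm_sq (hV : IsLambdaContraction K V) (hV' : IsLambdaContraction K V')
    (hW't : IsTCKFamily K W')
    (hdil' : ∀ (l : K.Λ) (ξ : H'), adjoint (W' l) (ι' ξ) = ι' (adjoint (V' l) ξ))
    {X : H →L[ℂ] H'} (hX : CovariantOp V V' X) (κ : K.Λ) (ξ : H) (m : Fin r → ℕ) :
    ⟪Sgen V ι' W' X κ ξ m, Sgen V ι' W' X κ ξ m⟫ = ((cfun V X κ ξ m : ℝ) : ℂ) := by
  rw [Sgen, sum_inner_ortho hW't _ (fun β => by rw [K.deg_comp _ _ β.2.2, β.2.1])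
    (Sgen_inj κ m)]
  rw [cfun, Complex.ofReal_sum]
  refine Finset.sum_congr rfl (fun β _ => ?_)
  have hsrc : K.src (K.comp κ β.1) = K.src β.1 := K.src_comp _ _ β.2.2
  rw [hsrc, dil_vertex hW't hV' hdil' (K.isVertex_src β.1), ι'.inner_map_map,
    cov_vertex_fix hV hX β.1 ξ, inner_self_complex]

/-- `⟪S(m+d), S(m)⟫ = c(m)` -/
lemma Sgen_inner (hV : IsLambdaContraction K V) (hV' : IsLambdaContraction K V')
    (hW't : IsTCKFamily K W')
    (hdil' : ∀ (l : K.Λ) (ξ : H'), adjoint (W' l) (ι' ξ) = ι' (adjoint (V' l) ξ))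
    {X : H →L[ℂ] H'} (hX : CovariantOp V V' X) (κ : K.Λ) (ξ : H) (m d : Fin r → ℕ) :
    ⟪Sgen V ι' W' X κ ξ (m + d), Sgen V ι' W' X κ ξ m⟫ = ((cfun V X κ ξ m : ℝ) : ℂ) := by
  classical
  -- reindex S(m+d) by two-step extensions
  have hre : Sgen V ι' W' X κ ξ (m + d)
      = ∑ p : Σ β : {β : K.Λ // K.deg β = m ∧ K.src κ = K.tgt β},
          {γ : K.Λ // K.deg γ = d ∧ K.src β.1 = K.tgt γ},
        W' (K.comp κ (K.comp p.1.1 p.2.1)) (ι' (X (adjoint (V (K.comp p.1.1 p.2.1)) ξ))) := by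
    rw [Sgen, ← Equiv.sum_comp (ecompEquiv κ m d).symm]
    rfl
  rw [hre, sum_inner]
  have hterm : ∀ p : Σ β : {β : K.Λ // K.deg β = m ∧ K.src κ = K.tgt β},
      {γ : K.Λ // K.deg γ = d ∧ K.src β.1 = K.tgt γ},
      ⟪W' (K.comp κ (K.comp p.1.1 p.2.1)) (ι' (X (adjoint (V (K.comp p.1.1 p.2.1)) ξ))),
        Sgen V ι' W' X κ ξ m⟫
      = ⟪V' p.2.1 (X (adjoint (V p.2.1) (adjoint (V p.1.1) ξ))), X (adjoint (V p.1.1) ξ)⟫ := by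
    rintro ⟨β, γ⟩
    rw [Sgen, inner_sum]
    rw [Finset.sum_eq_single_of_mem β (Finset.mem_univ β)]
    · -- diagonal term
      have hassoc : K.comp κ (K.comp β.1 γ.1) = K.comp (K.comp κ β.1) γ.1 :=
        (K.comp_assoc κ β.1 γ.1 β.2.2 γ.2.2).symm
      have hA : adjoint (W' (K.comp κ (K.comp β.1 γ.1))) ∘L W' (K.comp κ β.1)
          = adjoint (W' γ.1) := by
        refine tck_adj_comp_of_fac hW't ?_ ?_ ?_
        · rw [K.deg_comp _ _ (K.tgt_comp _ _ γ.2.2 ▸ β.2.2 : K.src κ = K.tgt (K.comp β.1 γ.1)),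
            K.deg_comp _ _ γ.2.2, K.deg_comp _ _ β.2.2, γ.2.1, add_assoc]
        · rw [K.src_comp _ _ β.2.2]; exact γ.2.2
        · exact hassoc
      have hadj : W' (K.comp κ β.1) = adjoint (adjoint (W' (K.comp κ β.1))) :=
        (adjoint_adjoint _).symm
      have h1 : ⟪W' (K.comp κ (K.comp β.1 γ.1)) (ι' (X (adjoint (V (K.comp β.1 γ.1)) ξ))),
          W' (K.comp κ β.1) (ι' (X (adjoint (V β.1) ξ)))⟫
          = ⟪W' γ.1 (ι' (X (adjoint (V (K.comp β.1 γ.1)) ξ))), ι' (X (adjoint (V β.1) ξ))⟫ := by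
        rw [← adjoint_inner_left (W' (K.comp κ β.1))]
        rw [← ContinuousLinearMap.comp_apply]
        have : adjoint (W' (K.comp κ β.1)) ∘L W' (K.comp κ (K.comp β.1 γ.1))
            = W' γ.1 := by
          have := congrArg adjoint hA
          rwa [adjoint_comp, adjoint_adjoint, adjoint_adjoint] at this
        rw [this]
      rw [h1]
      have h2 : ⟪W' γ.1 (ι' (X (adjoint (V (K.comp β.1 γ.1)) ξ))), ι' (X (adjoint (V β.1) ξ))⟫
          = ⟪X (adjoint (V (K.comp β.1 γ.1)) ξ), adjoint (V' γ.1) (X (adjoint (V β.1) ξ))⟫ := by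
        rw [← adjoint_inner_right (W' γ.1), hdil' γ.1, ι'.inner_map_map]
      rw [h2]
      have h3 : adjoint (V (K.comp β.1 γ.1)) ξ = adjoint (V γ.1) (adjoint (V β.1) ξ) := by
        have := hV.2.1 β.1 γ.1 γ.2.2
        rw [← this, adjoint_comp]
        rfl
      rw [h3]
      exact adjoint_inner_right _ _ _
    · -- off-diagonal terms vanish
      intro β' _ hβ'
      have hassoc : K.comp κ (K.comp β.1 γ.1) = K.comp (K.comp κ β.1) γ.1 :=
        (K.comp_assoc κ β.1 γ.1 β.2.2 γ.2.2).symm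
      have hA : adjoint (W' (K.comp κ (K.comp β.1 γ.1))) ∘L W' (K.comp κ β'.1) = 0 := by
        refine tck_adj_comp_of_nfac hW't (m := d) ?_ ?_
        · rw [K.deg_comp _ _ (K.tgt_comp _ _ γ.2.2 ▸ β.2.2 : K.src κ = K.tgt (K.comp β.1 γ.1)),
            K.deg_comp _ _ γ.2.2, K.deg_comp _ _ β'.2.2,
            β.2.1, β'.2.1, γ.2.1, add_assoc]
        · intro δ hδd hδc hδe
          have h4 : K.comp κ (K.comp β.1 γ.1) = K.comp κ (K.comp β'.1 δ) := by
            rw [hδe, K.comp_assoc κ β'.1 δ β'.2.2 (by rwa [K.src_comp _ _ β'.2.2] at hδc)]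
          have h5 : K.comp β.1 γ.1 = K.comp β'.1 δ := by
            refine K.comp_left_cancel ?_ ?_ ?_ h4
            · rw [K.deg_comp _ _ γ.2.2, K.deg_comp _ _
                (by rwa [K.src_comp _ _ β'.2.2] at hδc), β.2.1, β'.2.1, γ.2.1, hδd]
            · rw [K.tgt_comp _ _ γ.2.2]; exact β.2.2
            · rw [K.tgt_comp _ _ (by rwa [K.src_comp _ _ β'.2.2] at hδc)]; exact β'.2.2
          have h6 := K.fac_unique (β.2.1.trans β'.2.1.symm) (γ.2.1.trans hδd.symm)
            γ.2.2 (by rwa [K.src_comp _ _ β'.2.2] at hδc) h5 rfl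
          exact hβ' (Subtype.ext h6.1.symm)
      have h1 : ⟪W' (K.comp κ (K.comp β.1 γ.1)) (ι' (X (adjoint (V (K.comp β.1 γ.1)) ξ))),
          W' (K.comp κ β'.1) (ι' (X (adjoint (V β'.1) ξ)))⟫
          = ⟪(adjoint (W' (K.comp κ β'.1)) ∘L W' (K.comp κ (K.comp β.1 γ.1)))
              (ι' (X (adjoint (V (K.comp β.1 γ.1)) ξ))), ι' (X (adjoint (V β'.1) ξ))⟫ := by
        rw [ContinuousLinearMap.comp_apply, adjoint_inner_left]
      rw [h1]
      have h2 : adjoint (W' (K.comp κ β'.1)) ∘L W' (K.comp κ (K.comp β.1 γ.1)) = 0 := by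
        have := congrArg adjoint hA
        rwa [adjoint_comp, adjoint_adjoint, adjoint_zero_endo] at this
      rw [h2]
      simp
  rw [Finset.sum_congr rfl (fun p _ => hterm p)]
  -- regroup the sigma sum and apply covariance
  rw [← Finset.univ_sigma_univ, Finset.sum_sigma]
  have hβterm : ∀ β : {β : K.Λ // K.deg β = m ∧ K.src κ = K.tgt β},
      ∑ γ : {γ : K.Λ // K.deg γ = d ∧ K.src β.1 = K.tgt γ},
        ⟪V' γ.1 (X (adjoint (V γ.1) (adjoint (V β.1) ξ))), X (adjoint (V β.1) ξ)⟫
      = ((‖X (adjoint (V β.1) ξ)‖ ^ 2 : ℝ) : ℂ) := by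
    intro β
    have hcollapse := kg_sum_collapse0 (K := K) (b := β.1) (m := d)
      (f := fun γ : {l : K.Λ // K.deg l = d} =>
        ⟪V' γ.1 (X (adjoint (V γ.1) (adjoint (V β.1) ξ))), X (adjoint (V β.1) ξ)⟫)
      (fun γ hc => by
        have hz : V β.1 ∘L V γ.1 = 0 := hV.1 β.1 γ.1 hc
        have : adjoint (V γ.1) (adjoint (V β.1) ξ) = adjoint (V β.1 ∘L V γ.1) ξ := by
          rw [adjoint_comp]; rfl
        rw [this, hz]
        simp)
    rw [← hcollapse, ← sum_inner, hX d (adjoint (V β.1) ξ), inner_self_complex]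
  rw [Finset.sum_congr rfl (fun β _ => hβterm β), cfun, Complex.ofReal_sum]

end Main3
section Main4

set_option linter.unusedSectionVars false

lemma pi_sub_add {r : ℕ} {k n : Fin r → ℕ} (h : k ≤ n) : k + (n - k) = n :=
  funext fun j => Nat.add_sub_cancel' (h j)

variable {r : ℕ} {K : KGraph r}
variable {H : Type u} [NormedAddCommGroup H] [InnerProductSpace ℂ H] [CompleteSpace H]
variable {H' : Type u} [NormedAddCommGroup H'] [InnerProductSpace ℂ H'] [CompleteSpace H']
variable {K₁ : Type u} [NormedAddCommGroup K₁] [InnerProductSpace ℂ K₁] [CompleteSpace K₁]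
variable {K₂ : Type u} [NormedAddCommGroup K₂] [InnerProductSpace ℂ K₂] [CompleteSpace K₂]
variable [∀ n : Fin r → ℕ, Fintype {l : K.Λ // K.deg l = n}]
variable [∀ (a : K.Λ) (m : Fin r → ℕ), Fintype {β : K.Λ // K.deg β = m ∧ K.src a = K.tgt β}]
variable {V : K.Λ → H →L[ℂ] H} {V' : K.Λ → H' →L[ℂ] H'}
variable {ι : H →ₗᵢ[ℂ] K₁} {W : K.Λ → K₁ →L[ℂ] K₁}
variable {ι' : H' →ₗᵢ[ℂ] K₂} {W' : K.Λ → K₂ →L[ℂ] K₂}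

local notation "⟪" x ", " y "⟫" => @inner ℂ _ _ x y

/-- the net `n ↦ T_n z` is Cauchy -/
def cauchyApprox (ι : H →ₗᵢ[ℂ] K₁) (W : K.Λ → K₁ →L[ℂ] K₁) (ι' : H' →ₗᵢ[ℂ] K₂)
    (W' : K.Λ → K₂ →L[ℂ] K₂) (X : H →L[ℂ] H') (z : K₁) : Prop :=
  ∀ ε : ℝ, 0 < ε → ∃ n₀ : Fin r → ℕ, ∀ n n' : Fin r → ℕ, n₀ ≤ n → n₀ ≤ n' →
    ‖approxOp ι W ι' W' X n z - approxOp ι W ι' W' X n' z‖ ≤ ε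

lemma cauchy_gen (hVc : IsLambdaContraction K V) (hV'c : IsLambdaContraction K V')
    (hWt : IsTCKFamily K W) (hW't : IsTCKFamily K W') (hWiso : IsLambdaIsometry K W)
    (hdil : ∀ (l : K.Λ) (ξ : H), adjoint (W l) (ι ξ) = ι (adjoint (V l) ξ))
    (hdil' : ∀ (l : K.Λ) (ξ : H'), adjoint (W' l) (ι' ξ) = ι' (adjoint (V' l) ξ))
    {X : H →L[ℂ] H'} (hX : CovariantOp V V' X) (κ : K.Λ) (ξ : H) :
    cauchyApprox ι W ι' W' X (W κ (ι ξ)) := by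
  intro ε hε
  set c : (Fin r → ℕ) → ℝ := cfun V X κ ξ with hc
  set S : (Fin r → ℕ) → K₂ := Sgen V ι' W' X κ ξ with hS
  set z : K₁ := W κ (ι ξ) with hz
  have hCS : ∀ m, ⟪S m, S m⟫ = ((c m : ℝ) : ℂ) :=
    fun m => Sgen_norm_sq hVc hV'c hW't hdil' hX κ ξ m
  have hC3 : ∀ m d, ⟪S (m + d), S m⟫ = ((c m : ℝ) : ℂ) :=
    fun m d => Sgen_inner hVc hV'c hW't hdil' hX κ ξ m d
  have hnorm : ∀ m, ‖S m‖ ^ 2 = c m := by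
    intro m
    have h := (inner_self_complex (S m)).symm.trans (hCS m)
    exact_mod_cast h
  have hdiff : ∀ m d, ‖S (m + d) - S m‖ ^ 2 = c (m + d) - c m := by
    intro m d
    have h1 : ⟪S (m + d) - S m, S (m + d) - S m⟫ = ((c (m + d) - c m : ℝ) : ℂ) := by
      rw [inner_sub_sub_self, hCS, hCS, hC3]
      have h2 : ⟪S m, S (m + d)⟫ = ((c m : ℝ) : ℂ) := by
        rw [← inner_conj_symm, hC3]
        exact Complex.conj_ofReal _
      rw [h2]
      push_cast
      ring
    have h3 := (inner_self_complex _).symm.trans h1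
    exact_mod_cast h3
  have happrox : ∀ p, K.deg κ ≤ p → approxOp ι W ι' W' X p z = S (p - K.deg κ) := by
    intro p hp
    have h := approxOp_gen (ι' := ι') (W' := W') hWt hdil X κ (p - K.deg κ) ξ
    rw [pi_sub_add hp] at h
    exact h
  have hbound : ∀ m, c m ≤ (‖X‖ * ‖z‖) ^ 2 := by
    intro m
    rw [← hnorm m]
    have h1 : S m = approxOp ι W ι' W' X (K.deg κ + m) z := by
      rw [happrox (K.deg κ + m) le_self_add]
      congr 1
      funext j
      show m j = (K.deg κ j + m j) - K.deg κ j
      omega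
    rw [h1]
    exact pow_le_pow_left₀ (norm_nonneg _) (approxOp_norm_le hW't hWiso X _ z) 2
  set σ : ℝ := ⨆ m, c m with hσ
  have hba : BddAbove (Set.range c) := by
    refine ⟨(‖X‖ * ‖z‖) ^ 2, ?_⟩
    rintro x ⟨m, rfl⟩
    exact hbound m
  have hle : ∀ m, c m ≤ σ := fun m => le_ciSup hba m
  have hδpos : (0 : ℝ) < (ε / 2) ^ 2 := by positivity
  obtain ⟨m₀, hm₀⟩ := exists_lt_of_lt_ciSup (sub_lt_self σ hδpos)
  refine ⟨K.deg κ + m₀, fun n n' hn hn' => ?_⟩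
  have key : ∀ p, K.deg κ + m₀ ≤ p → ‖approxOp ι W ι' W' X p z - S m₀‖ ≤ ε / 2 := by
    intro p hp
    have hk : K.deg κ ≤ p := le_trans le_self_add hp
    have hm : m₀ ≤ p - K.deg κ := by
      intro j
      have h2 : K.deg κ j + m₀ j ≤ p j := hp j
      show m₀ j ≤ p j - K.deg κ j
      omega
    rw [happrox p hk]
    have h2 := hdiff m₀ ((p - K.deg κ) - m₀)
    rw [pi_sub_add hm] at h2
    have h3 : ‖S (p - K.deg κ) - S m₀‖ ^ 2 < (ε / 2) ^ 2 := by
      rw [h2]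
      have := hle (p - K.deg κ)
      linarith [hm₀]
    have h4 := Real.sqrt_le_sqrt h3.le
    rwa [Real.sqrt_sq (norm_nonneg _), Real.sqrt_sq (by positivity)] at h4
  have hsplit : approxOp ι W ι' W' X n z - approxOp ι W ι' W' X n' z
      = (approxOp ι W ι' W' X n z - S m₀) - (approxOp ι W ι' W' X n' z - S m₀) := by
    abel
  rw [hsplit]
  calc ‖(approxOp ι W ι' W' X n z - S m₀) - (approxOp ι W ι' W' X n' z - S m₀)‖
      ≤ ‖approxOp ι W ι' W' X n z - S m₀‖ + ‖approxOp ι W ι' W' X n' z - S m₀‖ :=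
        norm_sub_le _ _
    _ ≤ ε / 2 + ε / 2 := add_le_add (key n hn) (key n' hn')
    _ = ε := by ring

lemma cauchy_zero (X : H →L[ℂ] H') : cauchyApprox ι W ι' W' X 0 := by
  intro ε hε
  exact ⟨0, fun n n' _ _ => by simp [le_of_lt hε]⟩

lemma cauchy_add {X : H →L[ℂ] H'} {z w : K₁} (hz : cauchyApprox ι W ι' W' X z)
    (hw : cauchyApprox ι W ι' W' X w) : cauchyApprox ι W ι' W' X (z + w) := by
  intro ε hε
  obtain ⟨n₁, h₁⟩ := hz (ε / 2) (by positivity)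
  obtain ⟨n₂, h₂⟩ := hw (ε / 2) (by positivity)
  refine ⟨n₁ ⊔ n₂, fun n n' hn hn' => ?_⟩
  have e : ∀ p, approxOp ι W ι' W' X p (z + w)
      = approxOp ι W ι' W' X p z + approxOp ι W ι' W' X p w := fun p => map_add _ _ _
  rw [e, e]
  have hsplit : approxOp ι W ι' W' X n z + approxOp ι W ι' W' X n w
      - (approxOp ι W ι' W' X n' z + approxOp ι W ι' W' X n' w)
      = (approxOp ι W ι' W' X n z - approxOp ι W ι' W' X n' z)
        + (approxOp ι W ι' W' X n w - approxOp ι W ι' W' X n' w) := by abel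
  rw [hsplit]
  calc ‖_ + _‖ ≤ ‖approxOp ι W ι' W' X n z - approxOp ι W ι' W' X n' z‖
        + ‖approxOp ι W ι' W' X n w - approxOp ι W ι' W' X n' w‖ := norm_add_le _ _
    _ ≤ ε / 2 + ε / 2 := add_le_add
        (h₁ n n' (le_trans le_sup_left hn) (le_trans le_sup_left hn'))
        (h₂ n n' (le_trans le_sup_right hn) (le_trans le_sup_right hn'))
    _ = ε := by ring

lemma cauchy_smul {X : H →L[ℂ] H'} {z : K₁} (a : ℂ) (hz : cauchyApprox ι W ι' W' X z) :
    cauchyApprox ι W ι' W' X (a • z) := by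
  intro ε hε
  by_cases ha : a = 0
  · subst ha
    simpa using cauchy_zero (ι := ι) (W := W) (ι' := ι') (W' := W') X ε hε
  have hna : (0 : ℝ) < ‖a‖ := norm_pos_iff.mpr ha
  obtain ⟨n₁, h₁⟩ := hz (ε / ‖a‖) (div_pos hε hna)
  refine ⟨n₁, fun n n' hn hn' => ?_⟩
  have e : ∀ p, approxOp ι W ι' W' X p (a • z) = a • approxOp ι W ι' W' X p z :=
    fun p => map_smul _ _ _
  rw [e, e, ← smul_sub, norm_smul]
  have hane : ‖a‖ ≠ 0 := ne_of_gt hna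
  calc ‖a‖ * ‖approxOp ι W ι' W' X n z - approxOp ι W ι' W' X n' z‖
      ≤ ‖a‖ * (ε / ‖a‖) := by
        exact mul_le_mul_of_nonneg_left (h₁ n n' hn hn') (norm_nonneg a)
    _ = ε := by
        rw [mul_comm]
        exact div_mul_cancel₀ ε hane

/-- every vector has the Cauchy property, via density -/
lemma cauchy_all (hVc : IsLambdaContraction K V) (hV'c : IsLambdaContraction K V')
    (hWt : IsTCKFamily K W) (hW't : IsTCKFamily K W')
    (hWiso : IsLambdaIsometry K W)
    (hdil : ∀ (l : K.Λ) (ξ : H), adjoint (W l) (ι ξ) = ι (adjoint (V l) ξ))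
    (hdil' : ∀ (l : K.Λ) (ξ : H'), adjoint (W' l) (ι' ξ) = ι' (adjoint (V' l) ξ))
    (hWmin : Dense ((Submodule.span ℂ {x : K₁ | ∃ (l : K.Λ) (ξ : H), x = W l (ι ξ)} :
      Submodule ℂ K₁) : Set K₁))
    {X : H →L[ℂ] H'} (hX : CovariantOp V V' X) (z : K₁) :
    cauchyApprox ι W ι' W' X z := by
  have hspan : ∀ y ∈ (Submodule.span ℂ {x : K₁ | ∃ (l : K.Λ) (ξ : H), x = W l (ι ξ)} :
      Submodule ℂ K₁), cauchyApprox ι W ι' W' X y := by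
    intro y hy
    induction hy using Submodule.span_induction with
    | mem x hx =>
        obtain ⟨l, ξ, rfl⟩ := hx
        exact cauchy_gen hVc hV'c hWt hW't hWiso hdil hdil' hX l ξ
    | zero => exact cauchy_zero X
    | add x y hx hy ihx ihy => exact cauchy_add ihx ihy
    | smul a x hx ihx => exact cauchy_smul a ihx
  intro ε hε
  have hX1 : (0 : ℝ) < ‖X‖ + 1 := by positivity
  obtain ⟨y, hy, hyz⟩ : ∃ y ∈ (Submodule.span ℂ
      {x : K₁ | ∃ (l : K.Λ) (ξ : H), x = W l (ι ξ)} : Submodule ℂ K₁),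
      ‖z - y‖ < ε / (4 * (‖X‖ + 1)) := by
    have := Metric.mem_closure_iff.mp (by rw [hWmin.closure_eq]; trivial :
      z ∈ closure ((Submodule.span ℂ {x : K₁ | ∃ (l : K.Λ) (ξ : H), x = W l (ι ξ)} :
        Submodule ℂ K₁) : Set K₁)) (ε / (4 * (‖X‖ + 1))) (by positivity)
    obtain ⟨y, hy, hd⟩ := this
    exact ⟨y, hy, by rwa [dist_eq_norm] at hd⟩
  obtain ⟨n₁, h₁⟩ := hspan y hy (ε / 2) (by positivity)
  refine ⟨n₁, fun n n' hn hn' => ?_⟩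
  have hTbd : ∀ p, ‖approxOp ι W ι' W' X p z - approxOp ι W ι' W' X p y‖
      ≤ ε / 4 := by
    intro p
    have h2 : approxOp ι W ι' W' X p z - approxOp ι W ι' W' X p y
        = approxOp ι W ι' W' X p (z - y) := (map_sub _ _ _).symm
    rw [h2]
    calc ‖approxOp ι W ι' W' X p (z - y)‖ ≤ ‖X‖ * ‖z - y‖ :=
          approxOp_norm_le hW't hWiso X p (z - y)
      _ ≤ (‖X‖ + 1) * ‖z - y‖ := by
          exact mul_le_mul_of_nonneg_right (by linarith) (norm_nonneg _)
      _ ≤ (‖X‖ + 1) * (ε / (4 * (‖X‖ + 1))) := by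
          exact mul_le_mul_of_nonneg_left hyz.le (by positivity)
      _ = ε / 4 := by field_simp
  have hsplit : approxOp ι W ι' W' X n z - approxOp ι W ι' W' X n' z
      = (approxOp ι W ι' W' X n z - approxOp ι W ι' W' X n y)
        + (approxOp ι W ι' W' X n y - approxOp ι W ι' W' X n' y)
        + (approxOp ι W ι' W' X n' y - approxOp ι W ι' W' X n' z) := by abel
  rw [hsplit]
  calc ‖_‖ ≤ ‖approxOp ι W ι' W' X n z - approxOp ι W ι' W' X n y
        + (approxOp ι W ι' W' X n y - approxOp ι W ι' W' X n' y)‖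
        + ‖approxOp ι W ι' W' X n' y - approxOp ι W ι' W' X n' z‖ := norm_add_le _ _
    _ ≤ ‖approxOp ι W ι' W' X n z - approxOp ι W ι' W' X n y‖
        + ‖approxOp ι W ι' W' X n y - approxOp ι W ι' W' X n' y‖
        + ‖approxOp ι W ι' W' X n' y - approxOp ι W ι' W' X n' z‖ := by
          have := norm_add_le (approxOp ι W ι' W' X n z - approxOp ι W ι' W' X n y)
            (approxOp ι W ι' W' X n y - approxOp ι W ι' W' X n' y)
          linarith
    _ ≤ ε / 4 + ε / 2 + ε / 4 := by
        refine add_le_add (add_le_add (hTbd n) (h₁ n n' hn hn')) ?_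
        rw [norm_sub_rev]
        exact hTbd n'
    _ = ε := by ring

end Main4
section Main5

set_option linter.unusedSectionVars false

variable {r : ℕ} {K : KGraph r}
variable {H : Type u} [NormedAddCommGroup H] [InnerProductSpace ℂ H] [CompleteSpace H]
variable {H' : Type u} [NormedAddCommGroup H'] [InnerProductSpace ℂ H'] [CompleteSpace H']
variable {K₁ : Type u} [NormedAddCommGroup K₁] [InnerProductSpace ℂ K₁] [CompleteSpace K₁]
variable {K₂ : Type u} [NormedAddCommGroup K₂] [InnerProductSpace ℂ K₂] [CompleteSpace K₂]
variable [∀ n : Fin r → ℕ, Fintype {l : K.Λ // K.deg l = n}]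
variable [∀ (a : K.Λ) (m : Fin r → ℕ), Fintype {β : K.Λ // K.deg β = m ∧ K.src a = K.tgt β}]
variable {V : K.Λ → H →L[ℂ] H} {V' : K.Λ → H' →L[ℂ] H'}
variable {ι : H →ₗᵢ[ℂ] K₁} {W : K.Λ → K₁ →L[ℂ] K₁}
variable {ι' : H' →ₗᵢ[ℂ] K₂} {W' : K.Λ → K₂ →L[ℂ] K₂}

lemma exists_intertwiner
    (hVc : IsLambdaContraction K V) (hV'c : IsLambdaContraction K V')
    (hWt : IsTCKFamily K W) (hW't : IsTCKFamily K W')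
    (hWiso : IsLambdaIsometry K W)
    (hdil : ∀ (l : K.Λ) (ξ : H), adjoint (W l) (ι ξ) = ι (adjoint (V l) ξ))
    (hdil' : ∀ (l : K.Λ) (ξ : H'), adjoint (W' l) (ι' ξ) = ι' (adjoint (V' l) ξ))
    (hWmin : Dense ((Submodule.span ℂ {x : K₁ | ∃ (l : K.Λ) (ξ : H), x = W l (ι ξ)} :
      Submodule ℂ K₁) : Set K₁))
    {X : H →L[ℂ] H'} (hX : CovariantOp V V' X) :
    ∃ U : K₁ →L[ℂ] K₂, (∀ l : K.Λ, U ∘L W l = W' l ∘L U) ∧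
      adjoint ι'.toContinuousLinearMap ∘L (U ∘L ι.toContinuousLinearMap) = X ∧
      ∀ z : K₁, ‖U z‖ ≤ ‖X‖ * ‖z‖ := by
  have hcau : ∀ z, cauchyApprox ι W ι' W' X z :=
    fun z => cauchy_all hVc hV'c hWt hW't hWiso hdil hdil' hWmin hX z
  have hseq : ∀ z : K₁, CauchySeq (fun N : ℕ => approxOp ι W ι' W' X (fun _ => N) z) := by
    intro z
    rw [Metric.cauchySeq_iff]
    intro ε hε
    obtain ⟨n₀, h₀⟩ := hcau z (ε / 2) (by positivity)
    refine ⟨Finset.univ.sup n₀, fun M hM N hN => ?_⟩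
    have hle : ∀ P : ℕ, Finset.univ.sup n₀ ≤ P → n₀ ≤ (fun _ => P : Fin r → ℕ) :=
      fun P hP j => le_trans (Finset.le_sup (Finset.mem_univ j)) hP
    calc dist (approxOp ι W ι' W' X (fun _ => M) z) (approxOp ι W ι' W' X (fun _ => N) z)
        = ‖approxOp ι W ι' W' X (fun _ => M) z - approxOp ι W ι' W' X (fun _ => N) z‖ :=
          dist_eq_norm _ _
      _ ≤ ε / 2 := h₀ _ _ (hle M hM) (hle N hN)
      _ < ε := by linarith
  have hconv : ∀ z : K₁, ∃ y : K₂,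
      Filter.Tendsto (fun N : ℕ => approxOp ι W ι' W' X (fun _ => N) z)
        Filter.atTop (nhds y) := fun z => cauchySeq_tendsto_of_complete (hseq z)
  choose Uf hUf using hconv
  have hTend : ∀ (z : K₁) (ε : ℝ), 0 < ε → ∃ n₀ : Fin r → ℕ, ∀ n, n₀ ≤ n →
      ‖approxOp ι W ι' W' X n z - Uf z‖ ≤ ε := by
    intro z ε hε
    obtain ⟨n₀, h₀⟩ := hcau z (ε / 2) (by positivity)
    obtain ⟨N₁, hN₁⟩ := (Metric.tendsto_atTop.mp (hUf z)) (ε / 2) (by positivity)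
    set N : ℕ := max N₁ (Finset.univ.sup n₀) with hN
    have hcN : n₀ ≤ (fun _ => N : Fin r → ℕ) :=
      fun j => le_trans (Finset.le_sup (Finset.mem_univ j)) (le_max_right _ _)
    refine ⟨n₀, fun n hn => ?_⟩
    calc ‖approxOp ι W ι' W' X n z - Uf z‖
        ≤ ‖approxOp ι W ι' W' X n z - approxOp ι W ι' W' X (fun _ => N) z‖
          + ‖approxOp ι W ι' W' X (fun _ => N) z - Uf z‖ := by
            have := norm_sub_le_norm_sub_add_norm_sub (approxOp ι W ι' W' X n z)
              (approxOp ι W ι' W' X (fun _ => N) z) (Uf z)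
            exact this
      _ ≤ ε / 2 + ε / 2 := by
          refine add_le_add (h₀ n _ hn hcN) ?_
          have := hN₁ N (le_max_left _ _)
          rw [dist_eq_norm] at this
          exact this.le
      _ = ε := by ring
  have hadd : ∀ z w : K₁, Uf (z + w) = Uf z + Uf w := by
    intro z w
    refine tendsto_nhds_unique (hUf (z + w)) ?_
    have h1 : (fun N : ℕ => approxOp ι W ι' W' X (fun _ => N) (z + w))
        = fun N : ℕ => approxOp ι W ι' W' X (fun _ => N) z
          + approxOp ι W ι' W' X (fun _ => N) w := funext fun N => map_add _ _ _
    rw [h1]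
    exact (hUf z).add (hUf w)
  have hsmul : ∀ (a : ℂ) (z : K₁), Uf (a • z) = a • Uf z := by
    intro a z
    refine tendsto_nhds_unique (hUf (a • z)) ?_
    have h1 : (fun N : ℕ => approxOp ι W ι' W' X (fun _ => N) (a • z))
        = fun N : ℕ => a • approxOp ι W ι' W' X (fun _ => N) z := funext fun N => map_smul _ _ _
    rw [h1]
    exact (hUf z).const_smul a
  have hbd : ∀ z : K₁, ‖Uf z‖ ≤ ‖X‖ * ‖z‖ := by
    intro z
    exact le_of_tendsto (hUf z).norm
      (Filter.Eventually.of_forall (fun N => approxOp_norm_le hW't hWiso X _ z))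
  refine ⟨LinearMap.mkContinuous
    { toFun := Uf, map_add' := hadd, map_smul' := hsmul } ‖X‖ hbd, ?_, ?_, ?_⟩
  · intro l
    ext ζ
    show Uf (W l ζ) = W' l (Uf ζ)
    have hB : Filter.Tendsto (fun N : ℕ => approxOp ι W ι' W' X (K.deg l + (fun _ => N)) (W l ζ))
        Filter.atTop (nhds (W' l (Uf ζ))) := by
      have h1 : (fun N : ℕ => approxOp ι W ι' W' X (K.deg l + (fun _ => N)) (W l ζ))
          = fun N : ℕ => W' l (approxOp ι W ι' W' X (fun _ => N) ζ) := by
        funext N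
        exact (approxOp_intertwine hWt hW't X l _ ζ).symm
      rw [h1]
      exact ((W' l).continuous.tendsto _).comp (hUf ζ)
    have hA : Filter.Tendsto (fun N : ℕ => approxOp ι W ι' W' X (K.deg l + (fun _ => N)) (W l ζ))
        Filter.atTop (nhds (Uf (W l ζ))) := by
      rw [Metric.tendsto_atTop]
      intro ε hε
      obtain ⟨n₀, h₀⟩ := hTend (W l ζ) (ε / 2) (by positivity)
      refine ⟨Finset.univ.sup n₀, fun N hN => ?_⟩
      have hle : n₀ ≤ K.deg l + (fun _ => N : Fin r → ℕ) := by
        intro j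
        have h1 : n₀ j ≤ N := le_trans (Finset.le_sup (Finset.mem_univ j)) hN
        show n₀ j ≤ K.deg l j + N
        omega
      calc dist (approxOp ι W ι' W' X (K.deg l + (fun _ => N)) (W l ζ)) (Uf (W l ζ))
          = ‖approxOp ι W ι' W' X (K.deg l + (fun _ => N)) (W l ζ) - Uf (W l ζ)‖ :=
            dist_eq_norm _ _
        _ ≤ ε / 2 := h₀ _ hle
        _ < ε := by linarith
    exact tendsto_nhds_unique hA hB
  · ext ξ
    show adjoint ι'.toContinuousLinearMap (Uf (ι ξ)) = X ξ
    have h1 : Filter.Tendsto (fun N : ℕ => adjoint ι'.toContinuousLinearMap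
        (approxOp ι W ι' W' X (fun _ => N) (ι ξ))) Filter.atTop
        (nhds (adjoint ι'.toContinuousLinearMap (Uf (ι ξ)))) :=
      ((adjoint ι'.toContinuousLinearMap).continuous.tendsto _).comp (hUf (ι ξ))
    have h2 : (fun N : ℕ => adjoint ι'.toContinuousLinearMap
        (approxOp ι W ι' W' X (fun _ => N) (ι ξ))) = fun _ : ℕ => X ξ :=
      funext fun N => approxOp_compress hdil hdil' hWiso hX _ ξ
    rw [h2] at h1
    exact tendsto_nhds_unique h1 tendsto_const_nhds
  · exact hbd

end Main5
section Main6

set_option linter.unusedSectionVars false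

variable {r : ℕ} {K : KGraph r}
variable {H : Type u} [NormedAddCommGroup H] [InnerProductSpace ℂ H] [CompleteSpace H]
variable {H' : Type u} [NormedAddCommGroup H'] [InnerProductSpace ℂ H'] [CompleteSpace H']
variable {K₁ : Type u} [NormedAddCommGroup K₁] [InnerProductSpace ℂ K₁] [CompleteSpace K₁]
variable {K₂ : Type u} [NormedAddCommGroup K₂] [InnerProductSpace ℂ K₂] [CompleteSpace K₂]
variable [∀ n : Fin r → ℕ, Fintype {l : K.Λ // K.deg l = n}]
variable [∀ (a : K.Λ) (m : Fin r → ℕ), Fintype {β : K.Λ // K.deg β = m ∧ K.src a = K.tgt β}]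
variable {V : K.Λ → H →L[ℂ] H} {V' : K.Λ → H' →L[ℂ] H'}
variable {ι : H →ₗᵢ[ℂ] K₁} {W : K.Λ → K₁ →L[ℂ] K₁}
variable {ι' : H' →ₗᵢ[ℂ] K₂} {W' : K.Λ → K₂ →L[ℂ] K₂}

local notation "⟪" x ", " y "⟫" => @inner ℂ _ _ x y

lemma intertwiner_unique
    (hWt : IsTCKFamily K W) (hW't : IsTCKFamily K W') (hWiso : IsLambdaIsometry K W)
    (hdil : ∀ (l : K.Λ) (ξ : H), adjoint (W l) (ι ξ) = ι (adjoint (V l) ξ))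
    (hdil' : ∀ (l : K.Λ) (ξ : H'), adjoint (W' l) (ι' ξ) = ι' (adjoint (V' l) ξ))
    (hWmin : Dense ((Submodule.span ℂ {x : K₁ | ∃ (l : K.Λ) (ξ : H), x = W l (ι ξ)} :
      Submodule ℂ K₁) : Set K₁))
    (hW'min : Dense ((Submodule.span ℂ {x : K₂ | ∃ (l : K.Λ) (ξ : H'), x = W' l (ι' ξ)} :
      Submodule ℂ K₂) : Set K₂))
    {U : K₁ →L[ℂ] K₂} (hU : ∀ l : K.Λ, U ∘L W l = W' l ∘L U)
    (hcomp : adjoint ι'.toContinuousLinearMap ∘L (U ∘L ι.toContinuousLinearMap) = 0) :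
    U = 0 := by
  classical
  have hcomp' : ∀ h : H, adjoint ι'.toContinuousLinearMap (U (ι h)) = 0 := by
    intro h
    have := congrArg (fun (T : H →L[ℂ] H') => T h) hcomp
    simpa using this
  -- inner products with generators of `K₂` vanish
  have hgen0 : ∀ (κ : K.Λ) (ξ : H) (μ : K.Λ) (η : H'),
      ⟪U (W κ (ι ξ)), W' μ (ι' η)⟫ = 0 := by
    intro κ ξ μ η
    set n : Fin r → ℕ := K.deg κ ⊔ K.deg μ with hn
    have hκn : K.deg κ ≤ n := le_sup_left
    have hμn : K.deg μ ≤ n := le_sup_right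
    have hexp : U (W κ (ι ξ)) = ∑ β : {β : K.Λ // K.deg β = n - K.deg κ ∧ K.src κ = K.tgt β},
        W' (K.comp κ β.1) (U (ι (adjoint (V β.1) ξ))) := by
      rw [← intertwiner_resolution hWiso hU n (W κ (ι ξ))]
      rw [kg_sum_collapse ((pi_sub_add hκn).symm)
        (f := fun l : {l : K.Λ // K.deg l = n} => W' l.1 (U (adjoint (W l.1) (W κ (ι ξ)))))]
      · refine Finset.sum_congr rfl (fun β _ => ?_)
        have hfac : adjoint (W (K.comp κ β.1)) ∘L W κ = adjoint (W β.1) :=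
          tck_adj_comp_of_fac hWt (by rw [K.deg_comp _ _ β.2.2, β.2.1, pi_sub_add hκn]) β.2.2 rfl
        have h1 : adjoint (W (K.comp κ β.1)) (W κ (ι ξ)) = adjoint (W β.1) (ι ξ) := by
          rw [← ContinuousLinearMap.comp_apply, hfac]
        rw [h1, hdil]
      · intro ν hν
        have h0 : adjoint (W ν.1) ∘L W κ = 0 :=
          tck_adj_comp_of_nfac hWt (m := n - K.deg κ) (by rw [ν.2, pi_sub_add hκn])
            (fun β hβd hβc hβe => hν ⟨β, hβd, hβc⟩ hβe)
        have h1 : adjoint (W ν.1) (W κ (ι ξ)) = 0 := by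
          rw [← ContinuousLinearMap.comp_apply, h0]; rfl
        rw [h1]
        simp
    rw [hexp, sum_inner]
    refine Finset.sum_eq_zero (fun β _ => ?_)
    have h1 : ⟪W' (K.comp κ β.1) (U (ι (adjoint (V β.1) ξ))), W' μ (ι' η)⟫
        = ⟪U (ι (adjoint (V β.1) ξ)),
            (adjoint (W' (K.comp κ β.1)) ∘L W' μ) (ι' η)⟫ := by
      rw [← adjoint_inner_right (W' (K.comp κ β.1))]
      rfl
    rw [h1]
    have hdeg : K.deg (K.comp κ β.1) = K.deg μ + (n - K.deg μ) := by
      rw [K.deg_comp _ _ β.2.2, β.2.1, pi_sub_add hκn, pi_sub_add hμn]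
    by_cases hfac : ∃ δ : K.Λ, K.deg δ = n - K.deg μ ∧ K.src μ = K.tgt δ
        ∧ K.comp κ β.1 = K.comp μ δ
    · obtain ⟨δ, hδd, hδc, hδe⟩ := hfac
      have hA : adjoint (W' (K.comp κ β.1)) ∘L W' μ = adjoint (W' δ) :=
        tck_adj_comp_of_fac hW't (by rw [hdeg, hδd]) hδc hδe
      rw [hA, hdil']
      have h2 : ⟪U (ι (adjoint (V β.1) ξ)), ι' (adjoint (V' δ) η)⟫
          = ⟪adjoint ι'.toContinuousLinearMap (U (ι (adjoint (V β.1) ξ))),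
              adjoint (V' δ) η⟫ :=
        (adjoint_inner_left ι'.toContinuousLinearMap (adjoint (V' δ) η)
          (U (ι (adjoint (V β.1) ξ)))).symm
      rw [h2, hcomp']
      exact inner_zero_left _
    · have hA : adjoint (W' (K.comp κ β.1)) ∘L W' μ = 0 := by
        refine tck_adj_comp_of_nfac hW't hdeg ?_
        intro δ hδd hδc hδe
        exact hfac ⟨δ, hδd, hδc, hδe⟩
      rw [hA]
      show ⟪U (ι (adjoint (V β.1) ξ)), (0 : K₂ →L[ℂ] K₂) (ι' η)⟫ = 0
      rw [ContinuousLinearMap.zero_apply]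
      exact inner_zero_right _
  -- generators are sent to zero
  have horth : ∀ (κ : K.Λ) (ξ : H), U (W κ (ι ξ)) = 0 := by
    intro κ ξ
    set x : K₂ := U (W κ (ι ξ)) with hx
    have hspan : ∀ z ∈ (Submodule.span ℂ {x : K₂ | ∃ (l : K.Λ) (ξ : H'), x = W' l (ι' ξ)} :
        Submodule ℂ K₂), ⟪x, z⟫ = 0 := by
      intro z hz
      induction hz using Submodule.span_induction with
      | mem y hy => obtain ⟨l, η, rfl⟩ := hy; exact hgen0 κ ξ l η
      | zero => exact inner_zero_right _
      | add y w _ _ ihy ihw => rw [inner_add_right, ihy, ihw, add_zero]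
      | smul a y _ ihy => rw [inner_smul_right, ihy, mul_zero]
    have hall : ∀ z : K₂, ⟪x, z⟫ = 0 := by
      intro z
      have hclosed : IsClosed {z : K₂ | ⟪x, z⟫ = 0} :=
        isClosed_eq (Continuous.inner continuous_const continuous_id) continuous_const
      have hsub : ((Submodule.span ℂ {x : K₂ | ∃ (l : K.Λ) (ξ : H'), x = W' l (ι' ξ)} :
          Submodule ℂ K₂) : Set K₂) ⊆ {z : K₂ | ⟪x, z⟫ = 0} := fun z hz => hspan z hz
      have := closure_minimal hsub hclosed
      rw [hW'min.closure_eq] at this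
      exact this (Set.mem_univ z)
    have := hall x
    exact inner_self_eq_zero.mp this
  -- conclude `U = 0`
  have hspan1 : ∀ z ∈ (Submodule.span ℂ {x : K₁ | ∃ (l : K.Λ) (ξ : H), x = W l (ι ξ)} :
      Submodule ℂ K₁), U z = 0 := by
    intro z hz
    induction hz using Submodule.span_induction with
    | mem y hy => obtain ⟨l, ξ, rfl⟩ := hy; exact horth l ξ
    | zero => exact map_zero U
    | add y w _ _ ihy ihw => rw [map_add, ihy, ihw, add_zero]
    | smul a y _ ihy => rw [map_smul, ihy, smul_zero]
  ext ζ
  have hclosed : IsClosed {z : K₁ | U z = 0} := isClosed_eq U.continuous continuous_const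
  have hsub : ((Submodule.span ℂ {x : K₁ | ∃ (l : K.Λ) (ξ : H), x = W l (ι ξ)} :
      Submodule ℂ K₁) : Set K₁) ⊆ {z : K₁ | U z = 0} := fun z hz => hspan1 z hz
  have h2 := closure_minimal hsub hclosed
  rw [hWmin.closure_eq] at h2
  exact h2 (Set.mem_univ ζ)

end Main6
/-- Compression gives an isometric bijection between the intertwiners
of the minimal Cuntz-Pimsner dilations `W`, `W̃` and the operators `X : H → H̃` with
`Σ_{λ∈Λ^n} Ṽ_λ X V_λ* = X` for all `n`. -/
theorem intertwiner_correspondence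
    {r : ℕ} (K : KGraph r) (hfin : K.FiniteGraph) (hns : K.NoSources)
    {H : Type u} [NormedAddCommGroup H] [InnerProductSpace ℂ H] [CompleteSpace H]
    {H' : Type u} [NormedAddCommGroup H'] [InnerProductSpace ℂ H'] [CompleteSpace H']
    (V : K.Λ → H →L[ℂ] H) (hV : IsLambdaIsometry K V)
    (V' : K.Λ → H' →L[ℂ] H') (hV' : IsLambdaIsometry K V')
    {K₁ : Type u} [NormedAddCommGroup K₁] [InnerProductSpace ℂ K₁] [CompleteSpace K₁]
    (ι : H →ₗᵢ[ℂ] K₁) (W : K.Λ → K₁ →L[ℂ] K₁)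
    (hWcp : IsCPFamily K W) (hWiso : IsLambdaIsometry K W)
    (hWdil : ∀ (l : K.Λ) (ξ : H), adjoint (W l) (ι ξ) = ι (adjoint (V l) ξ))
    (hWmin : Dense ((Submodule.span ℂ {x : K₁ | ∃ (l : K.Λ) (ξ : H), x = W l (ι ξ)} :
      Submodule ℂ K₁) : Set K₁))
    {K₂ : Type u} [NormedAddCommGroup K₂] [InnerProductSpace ℂ K₂] [CompleteSpace K₂]
    (ι' : H' →ₗᵢ[ℂ] K₂) (W' : K.Λ → K₂ →L[ℂ] K₂)
    (hW'cp : IsCPFamily K W') (hW'iso : IsLambdaIsometry K W')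
    (hW'dil : ∀ (l : K.Λ) (ξ : H'), adjoint (W' l) (ι' ξ) = ι' (adjoint (V' l) ξ))
    (hW'min : Dense ((Submodule.span ℂ {x : K₂ | ∃ (l : K.Λ) (ξ : H'), x = W' l (ι' ξ)} :
      Submodule ℂ K₂) : Set K₂)) :
    Set.BijOn
      (fun U : K₁ →L[ℂ] K₂ =>
        adjoint ι'.toContinuousLinearMap ∘L (U ∘L ι.toContinuousLinearMap))
      {U : K₁ →L[ℂ] K₂ | ∀ l : K.Λ, U ∘L W l = W' l ∘L U}
      {X : H →L[ℂ] H' | ∀ (n : Fin r → ℕ) (ξ : H),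
        HasSum (fun l : {l : K.Λ // K.deg l = n} => V' l.1 (X (adjoint (V l.1) ξ))) (X ξ)} ∧
    (∀ U : K₁ →L[ℂ] K₂, (∀ l : K.Λ, U ∘L W l = W' l ∘L U) →
      ‖adjoint ι'.toContinuousLinearMap ∘L (U ∘L ι.toContinuousLinearMap)‖ = ‖U‖) := by
  classical
  haveI I1 : ∀ n : Fin r → ℕ, Fintype {l : K.Λ // K.deg l = n} := by
    intro n
    haveI := finite_deg hfin n
    exact Fintype.ofFinite _
  haveI I2 : ∀ (a : K.Λ) (m : Fin r → ℕ),
      Fintype {β : K.Λ // K.deg β = m ∧ K.src a = K.tgt β} := by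
    intro a m
    haveI := finite_ecomp hfin a m
    exact Fintype.ofFinite _
  have hset : ∀ X : H →L[ℂ] H',
      (∀ (n : Fin r → ℕ) (ξ : H), HasSum
        (fun l : {l : K.Λ // K.deg l = n} => V' l.1 (X (adjoint (V l.1) ξ))) (X ξ))
      ↔ CovariantOp V V' X := by
    intro X
    constructor
    · intro h n ξ
      exact (hasSum_fintype _).unique (h n ξ)
    · intro h n ξ
      have h1 := hasSum_fintype
        (fun l : {l : K.Λ // K.deg l = n} => V' l.1 (X (adjoint (V l.1) ξ)))
      rwa [h n ξ] at h1
  have hsub : ∀ U₁ U₂ : K₁ →L[ℂ] K₂, (∀ l : K.Λ, U₁ ∘L W l = W' l ∘L U₁) →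
      (∀ l : K.Λ, U₂ ∘L W l = W' l ∘L U₂) →
      (adjoint ι'.toContinuousLinearMap ∘L (U₁ ∘L ι.toContinuousLinearMap)
        = adjoint ι'.toContinuousLinearMap ∘L (U₂ ∘L ι.toContinuousLinearMap)) → U₁ = U₂ := by
    intro U₁ U₂ h₁ h₂ he
    have hD : ∀ l : K.Λ, (U₁ - U₂) ∘L W l = W' l ∘L (U₁ - U₂) := by
      intro l
      rw [ContinuousLinearMap.sub_comp, ContinuousLinearMap.comp_sub, h₁ l, h₂ l]
    have hc : adjoint ι'.toContinuousLinearMap ∘L ((U₁ - U₂) ∘L ι.toContinuousLinearMap)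
        = 0 := by
      rw [ContinuousLinearMap.sub_comp, ContinuousLinearMap.comp_sub]
      rw [sub_eq_zero]
      exact he
    have h0 := intertwiner_unique hWcp.1 hW'cp.1 hWiso hWdil hW'dil hWmin hW'min hD hc
    exact sub_eq_zero.mp h0
  refine ⟨⟨?_, ?_, ?_⟩, ?_⟩
  · -- maps to
    intro U hU
    exact (hset _).mpr (compress_covariant hWiso hWdil hW'dil hU)
  · -- injective
    intro U₁ h₁ U₂ h₂ he
    exact hsub U₁ U₂ h₁ h₂ he
  · -- surjective
    intro X hX
    obtain ⟨U, hU1, hU2, _⟩ := exists_intertwiner hV.1 hV'.1 hWcp.1 hW'cp.1 hWiso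
      hWdil hW'dil hWmin ((hset X).mp hX)
    exact ⟨U, hU1, hU2⟩
  · -- isometric
    intro U hU
    have hXcov : CovariantOp V V'
        (adjoint ι'.toContinuousLinearMap ∘L (U ∘L ι.toContinuousLinearMap)) :=
      compress_covariant hWiso hWdil hW'dil hU
    obtain ⟨U', hU'1, hU'2, hU'3⟩ := exists_intertwiner hV.1 hV'.1 hWcp.1 hW'cp.1 hWiso
      hWdil hW'dil hWmin hXcov
    have hUU' : U' = U := hsub U' U hU'1 hU hU'2
    have h1 : ‖U‖ ≤ ‖adjoint ι'.toContinuousLinearMap ∘L (U ∘L ι.toContinuousLinearMap)‖ := by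
      have h1' : ‖U'‖ ≤ ‖adjoint ι'.toContinuousLinearMap ∘L (U ∘L ι.toContinuousLinearMap)‖ :=
        U'.opNorm_le_bound (norm_nonneg _) hU'3
      rwa [hUU'] at h1'
    have h2 : ‖adjoint ι'.toContinuousLinearMap ∘L (U ∘L ι.toContinuousLinearMap)‖ ≤ ‖U‖ := by
      refine ContinuousLinearMap.opNorm_le_bound _ (norm_nonneg U) (fun ξ => ?_)
      calc ‖(adjoint ι'.toContinuousLinearMap ∘L (U ∘L ι.toContinuousLinearMap)) ξ‖
          = ‖adjoint ι'.toContinuousLinearMap (U (ι ξ))‖ := rfl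
        _ ≤ ‖U (ι ξ)‖ := iota_adj_norm_le ι' _
        _ ≤ ‖U‖ * ‖ι ξ‖ := U.le_opNorm _
        _ = ‖U‖ * ‖ξ‖ := by rw [ι.norm_map]
    exact le_antisymm h2 h1
end
end

section
/- Let Λ be a rank-r graph, a ∈ Λ⁰, and let (V_λ)_{λ∈Λ} be a Λ-contraction on the one-dimensional Hilbert space ℂ (so each V_λ is a complex number) with V_a = 1. Write Λ_{a,a} = {λ ∈ Λ : r(λ) = s(λ) = a} and suppose that for each j ∈ {1,…,r}, κ_j := Σ_{λ∈Λ^{e_j}∩Λ_{a,a}} |V_λ|² < 1. Then the family (|V_λ|²)_{λ∈Λ_{a,a}} is summable with sum Π_{j=1}^r (1 − κ_j)^{−1}, the vector ξ = Σ_{λ∈Λ_{a,a}} conj(V_λ) δ_λ belongs to ℓ²(Λ), and the normalized vector ξ̃ = ξ/‖ξ‖ satisfies ⟨ξ̃, L_μ ξ̃⟩ = V_μ for every μ ∈ Λ (inner product conjugate-linear in the first variable). -/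
open scoped ComplexOrder
open ContinuousLinearMap

set_option synthInstance.maxHeartbeats 1000000
set_option maxHeartbeats 1000000

noncomputable section

universe u

/-- A `Λ`-contraction on the one-dimensional Hilbert space `ℂ`, written in terms of the
scalars representing the operators. -/
def IsScalarLambdaContraction {r : ℕ} (K : KGraph r) (v : K.Λ → ℂ) : Prop :=
  (∀ l m, K.src l ≠ K.tgt m → v l * v m = 0) ∧
  (∀ l m, K.src l = K.tgt m → v l * v m = v (K.comp l m)) ∧
  (∀ (n : Fin r → ℕ) (F : Finset K.Λ), (∀ l ∈ F, K.deg l = n) →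
    ∑ l ∈ F, ‖v l‖ ^ 2 ≤ 1) ∧
  (∀ a, K.IsVertex a → v a = 0 ∨ v a = 1) ∧
  HasSum (fun a : {a : K.Λ // K.IsVertex a} => v a.1) 1

/-!
Multiplicativity of `v` and `v b = 0` for the vertices `b ≠ a` force `v` to vanish off the
loops at `a`. By unique factorisation, `n ↦ ∑_{λ ∈ Λ^n} |v λ|²` is then a monoid homomorphism
`ℕ^r → [0, ∞]`, hence equals `∏ κ_j ^ n_j`, and summing over `n` gives the product of geometric
series `∏ (1 - κ_j)⁻¹`. For `ξ = conj ∘ v`, `⟨ξ, L_μ δ_λ⟩` is `v (μλ) = v μ v λ` when `μλ` is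
defined and `0 = v μ v λ` otherwise, so `⟨ξ, L_μ ξ⟩ = v μ ‖ξ‖²`.
-/

open scoped ENNReal ComplexConjugate InnerProductSpace

theorem ENNReal.tsum_mul_tsum {α β : Type*} (f : α → ℝ≥0∞) (g : β → ℝ≥0∞) :
    (∑' a, f a) * ∑' b, g b = ∑' p : α × β, f p.1 * g p.2 := by
  rw [ENNReal.tsum_prod (f := fun a b => f a * g b), ← ENNReal.tsum_mul_right]
  exact tsum_congr fun a => ENNReal.tsum_mul_left.symm

theorem ENNReal.tsum_fin_pi_prod {β : Type*} : ∀ {m : ℕ} (f : Fin m → β → ℝ≥0∞),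
    ∑' n : Fin m → β, ∏ i, f i (n i) = ∏ i, ∑' b, f i b
  | 0, f => by simp
  | m + 1, f => by
    rw [← (Fin.consEquiv fun _ => β).tsum_eq, Fin.prod_univ_succ, ← tsum_fin_pi_prod,
      ENNReal.tsum_mul_tsum]
    simp [Fin.consEquiv, Fin.prod_univ_succ]

theorem eq_prod_pow_of_map_add {ι M : Type*} [Fintype ι] [DecidableEq ι] [CommMonoid M]
    (f : (ι → ℕ) → M) (h_zero : f 0 = 1) (h_add : ∀ m n, f (m + n) = f m * f n) (n : ι → ℕ) :
    f n = ∏ i, f (Pi.single i 1) ^ n i := by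
  let F : Multiplicative (ι → ℕ) →* M :=
    { toFun := fun x => f x.toAdd, map_one' := h_zero, map_mul' := fun _ _ => h_add _ _ }
  have hn : Multiplicative.ofAdd n = ∏ i, Multiplicative.ofAdd (Pi.single i 1) ^ n i := by
    apply Multiplicative.toAdd.injective
    ext i
    simp [toAdd_prod, toAdd_pow, Finset.sum_apply, Pi.single_apply]
  simpa [F, map_prod, map_pow] using congrArg F hn

theorem inner_inv_norm_smul_apply_inv_norm_smul {E : Type*} [NormedAddCommGroup E]
    [InnerProductSpace ℂ E] (T : E →L[ℂ] E) {ξ : E} (hξ : ξ ≠ 0) {z : ℂ}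
    (h : ⟪ξ, T ξ⟫_ℂ = z * (‖ξ‖ ^ 2 : ℝ)) :
    ⟪((‖ξ‖⁻¹ : ℝ) : ℂ) • ξ, T (((‖ξ‖⁻¹ : ℝ) : ℂ) • ξ)⟫_ℂ = z := by
  have hnorm : (‖ξ‖ : ℂ) ≠ 0 := Complex.ofReal_ne_zero.2 (norm_ne_zero_iff.2 hξ)
  rw [map_smul, inner_smul_left, inner_smul_right, h, Complex.conj_ofReal]
  push_cast
  field_simp

namespace KGraph

variable {r : ℕ} (K : KGraph r)

def compOfComposable (m n : Fin r → ℕ)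
    (p : {p : {l // K.deg l = m} × {l // K.deg l = n} // K.src p.1 = K.tgt p.2}) :
    {l // K.deg l = m + n} :=
  ⟨K.comp p.1.1 p.1.2, by rw [K.deg_comp _ _ p.2, p.1.1.2, p.1.2.2]⟩

theorem compOfComposable_bijective (m n : Fin r → ℕ) :
    Function.Bijective (K.compOfComposable m n) := by
  constructor
  · rintro ⟨⟨e₁, l₁⟩, h₁⟩ ⟨⟨e₂, l₂⟩, h₂⟩ h
    obtain ⟨_, _, huniq⟩ := K.factorisation _ m n (K.compOfComposable m n ⟨(e₁, l₁), h₁⟩).2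
    have hpair := (huniq (e₁, l₁) ⟨e₁.2, l₁.2, h₁, rfl⟩).trans
      (huniq (e₂, l₂) ⟨e₂.2, l₂.2, h₂, (congrArg Subtype.val h).symm⟩).symm
    simp only [Prod.mk.injEq] at hpair
    ext <;> simp [hpair]
  · rintro ⟨l, hl⟩
    obtain ⟨⟨e, l'⟩, ⟨he, hl', hc, hcomp⟩, -⟩ := K.factorisation l m n hl
    exact ⟨⟨(⟨e, he⟩, ⟨l', hl'⟩), hc⟩, Subtype.ext hcomp⟩

end KGraph

theorem IsCreationFamily.inner_apply_single_one {r : ℕ} {K : KGraph r} [DecidableEq K.Λ]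
    {L : K.Λ → FockSpace K →L[ℂ] FockSpace K} (hL : IsCreationFamily K L) (x : FockSpace K)
    (μ l : K.Λ) :
    ⟪x, L μ (lp.single 2 l 1)⟫_ℂ =
      if K.src μ = K.tgt l then conj (x (K.comp μ l)) else 0 := by
  split_ifs with h
  · simp [(hL μ l).1 h, lp.inner_single_right]
  · rw [(hL μ l).2 h, inner_zero_right]

/-- Valued in `ℝ≥0∞` so that the sums over `Λ` can be rearranged without summability
side conditions. -/
def degWeight {r : ℕ} (K : KGraph r) (v : K.Λ → ℂ) (n : Fin r → ℕ) : ℝ≥0∞ :=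
  ∑' l : {l : K.Λ // K.deg l = n}, ENNReal.ofReal (‖v l‖ ^ 2)

namespace IsScalarLambdaContraction

variable {r : ℕ} {K : KGraph r} {v : K.Λ → ℂ} (hv : IsScalarLambdaContraction K v)
include hv

theorem mul_eq_zero_of_src_ne {l m : K.Λ} (h : K.src l ≠ K.tgt m) : v l * v m = 0 :=
  hv.1 l m h

theorem map_comp {l m : K.Λ} (h : K.src l = K.tgt m) : v (K.comp l m) = v l * v m :=
  (hv.2.1 l m h).symm

theorem eq_zero_of_isVertex_of_ne {a b : K.Λ} (ha : K.IsVertex a) (hva : v a = 1)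
    (hb : K.IsVertex b) (hba : b ≠ a) : v b = 0 := by
  classical
  refine (hv.2.2.2.1 b hb).resolve_right fun hvb => ?_
  have h := hv.2.2.1 0 {a, b} fun l hl => by
    rcases Finset.mem_insert.1 hl with rfl | hl
    exacts [ha, Finset.mem_singleton.1 hl ▸ hb]
  rw [Finset.sum_pair hba.symm, hva, hvb] at h
  norm_num at h

theorem tgt_eq_and_src_eq_of_ne_zero {a μ : K.Λ} (ha : K.IsVertex a) (hva : v a = 1)
    (hμ : v μ ≠ 0) : K.tgt μ = a ∧ K.src μ = a := by
  constructor <;> by_contra h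
  · have := hv.map_comp (K.src_eq_self _ (K.deg_tgt μ))
    rw [K.tgt_comp_self, hv.eq_zero_of_isVertex_of_ne ha hva (K.deg_tgt μ) h, zero_mul] at this
    exact hμ this
  · have := hv.map_comp (K.tgt_eq_self _ (K.deg_src μ)).symm
    rw [K.comp_src_self, hv.eq_zero_of_isVertex_of_ne ha hva (K.deg_src μ) h, mul_zero] at this
    exact hμ this

theorem degWeight_le_one (n : Fin r → ℕ) : degWeight K v n ≤ 1 := by
  classical
  rw [degWeight, ENNReal.tsum_eq_iSup_sum]
  refine iSup_le fun s => ?_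
  rw [← ENNReal.ofReal_sum_of_nonneg fun _ _ => sq_nonneg _, ENNReal.ofReal_le_one]
  simpa using hv.2.2.1 n (s.map (Function.Embedding.subtype _)) fun l hl => by
    obtain ⟨l, -, rfl⟩ := Finset.mem_map.1 hl
    exact l.2

theorem degWeight_zero {a : K.Λ} (ha : K.IsVertex a) (hva : v a = 1) : degWeight K v 0 = 1 := by
  rw [degWeight, tsum_eq_single ⟨a, ha⟩ fun b hb => ?_]
  · simp [hva]
  · rw [hv.eq_zero_of_isVertex_of_ne ha hva b.2 fun h => hb (Subtype.ext h)]
    simp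

theorem degWeight_add (m n : Fin r → ℕ) :
    degWeight K v (m + n) = degWeight K v m * degWeight K v n := by
  have hsupp : Function.support (fun p : {l // K.deg l = m} × {l // K.deg l = n} =>
      ENNReal.ofReal (‖v p.1 * v p.2‖ ^ 2)) ⊆ {p | K.src p.1 = K.tgt p.2} := fun p hp => by
    by_contra h
    exact hp (by simp only [hv.mul_eq_zero_of_src_ne h]; simp)
  rw [degWeight, degWeight, degWeight, ENNReal.tsum_mul_tsum,
    ← (Equiv.ofBijective _ (K.compOfComposable_bijective m n)).tsum_eq]
  simp_rw [← ENNReal.ofReal_mul (sq_nonneg _), ← mul_pow, ← norm_mul]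
  rw [← tsum_subtype_eq_of_support_subset hsupp]
  exact tsum_congr fun p => by simp [KGraph.compOfComposable, hv.map_comp p.2]

theorem degWeight_eq_prod {a : K.Λ} (ha : K.IsVertex a) (hva : v a = 1) (n : Fin r → ℕ) :
    degWeight K v n = ∏ j, degWeight K v (Pi.single j 1) ^ n j :=
  eq_prod_pow_of_map_add _ (hv.degWeight_zero ha hva) hv.degWeight_add n

theorem tsum_ofReal_norm_sq {a : K.Λ} (ha : K.IsVertex a) (hva : v a = 1) :
    ∑' l, ENNReal.ofReal (‖v l‖ ^ 2) = ∏ j, (1 - degWeight K v (Pi.single j 1))⁻¹ :=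
  calc ∑' l, ENNReal.ofReal (‖v l‖ ^ 2) = ∑' n, degWeight K v n :=
        (ENNReal.tsum_fiberwise _ K.deg).symm
    _ = ∑' n : Fin r → ℕ, ∏ j, degWeight K v (Pi.single j 1) ^ n j :=
        tsum_congr (hv.degWeight_eq_prod ha hva)
    _ = ∏ j, ∑' k, degWeight K v (Pi.single j 1) ^ k := ENNReal.tsum_fin_pi_prod _
    _ = ∏ j, (1 - degWeight K v (Pi.single j 1))⁻¹ := by simp_rw [ENNReal.tsum_geometric]

theorem hasSum_norm_sq {a : K.Λ} (ha : K.IsVertex a) (hva : v a = 1)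
    (hlt : ∀ j, degWeight K v (Pi.single j 1) < 1) :
    HasSum (fun l => ‖v l‖ ^ 2) (∏ j, (1 - (degWeight K v (Pi.single j 1)).toReal)⁻¹) := by
  have hfin : ∑' l, ENNReal.ofReal (‖v l‖ ^ 2) ≠ ⊤ := by
    rw [hv.tsum_ofReal_norm_sq ha hva]
    exact ENNReal.prod_ne_top fun j _ => ENNReal.inv_ne_top.2 (tsub_pos_of_lt (hlt j)).ne'
  have h := ENNReal.hasSum_toReal hfin
  rw [← ENNReal.tsum_toReal_eq fun _ => ENNReal.ofReal_ne_top, hv.tsum_ofReal_norm_sq ha hva,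
    ENNReal.toReal_prod] at h
  simpa only [ENNReal.toReal_ofReal (sq_nonneg _), ENNReal.toReal_inv,
    ENNReal.toReal_sub_of_le (hlt _).le ENNReal.one_ne_top, ENNReal.toReal_one] using h

theorem toReal_degWeight {a : K.Λ} (ha : K.IsVertex a) (hva : v a = 1) (n : Fin r → ℕ) :
    (degWeight K v n).toReal =
      ∑' l : {l : K.Λ // K.deg l = n ∧ K.tgt l = a ∧ K.src l = a}, ‖v l.1‖ ^ 2 := by
  rw [degWeight, ENNReal.tsum_toReal_eq fun _ => ENNReal.ofReal_ne_top]
  simp only [ENNReal.toReal_ofReal (sq_nonneg _)]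
  refine (tsum_subtype {l | K.deg l = n} fun l => ‖v l‖ ^ 2).trans <|
    (tsum_congr fun l => ?_).trans
      (tsum_subtype {l | K.deg l = n ∧ K.tgt l = a ∧ K.src l = a} fun l => ‖v l‖ ^ 2).symm
  by_cases hl : v l = 0
  · simp [Set.indicator, hl]
  · obtain ⟨htgt, hsrc⟩ := hv.tgt_eq_and_src_eq_of_ne_zero ha hva hl
    simp [Set.indicator, htgt, hsrc]

theorem inner_apply_creation [DecidableEq K.Λ]
    {L : K.Λ → FockSpace K →L[ℂ] FockSpace K} (hL : IsCreationFamily K L) (ξ : FockSpace K)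
    (hξ : ∀ l, ξ l = conj (v l)) (μ : K.Λ) :
    ⟪ξ, L μ ξ⟫_ℂ = v μ * (‖ξ‖ ^ 2 : ℝ) := by
  have hterm : ∀ l, ⟪ξ, L μ (lp.single 2 l (ξ l))⟫_ℂ = v μ * (‖ξ l‖ ^ 2 : ℝ) := by
    intro l
    have hsingle : lp.single 2 l (ξ l) = ξ l • (lp.single 2 l 1 : FockSpace K) := by
      rw [← lp.single_smul, smul_eq_mul, mul_one]
    rw [hsingle, map_smul, inner_smul_right, hL.inner_apply_single_one, hξ, RCLike.norm_conj]
    push_cast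
    rw [← Complex.conj_mul']
    split_ifs with h
    · rw [hξ, Complex.conj_conj, hv.map_comp h]
      ring
    · linear_combination -conj (v l) * hv.mul_eq_zero_of_src_ne h
  have hsum : HasSum (fun l => ⟪ξ, L μ (lp.single 2 l (ξ l))⟫_ℂ) ⟪ξ, L μ ξ⟫_ℂ :=
    (lp.hasSum_single ENNReal.ofNat_ne_top ξ).mapL ((innerSL ℂ ξ).comp (L μ))
  have hnorm : HasSum (fun l => ‖ξ l‖ ^ 2) (‖ξ‖ ^ 2) := by
    simpa using lp.hasSum_norm (by norm_num) ξ
  simp only [hterm] at hsum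
  exact hsum.unique ((hnorm.mapL Complex.ofRealCLM).mul_left (v μ))

end IsScalarLambdaContraction

/-- A `Λ`-contraction on `ℂ` supported at a vertex `a`, whose colour
sums `κ_j` are strictly less than `1`, arises as a vector state given by an explicit
vector of `ℓ²(Λ)`. -/
theorem character_is_vector_state
    {r : ℕ} (K : KGraph r) [DecidableEq K.Λ]
    (L : K.Λ → FockSpace K →L[ℂ] FockSpace K) (hL : IsCreationFamily K L)
    (a : K.Λ) (ha : K.IsVertex a)
    (v : K.Λ → ℂ) (hv : IsScalarLambdaContraction K v) (hva : v a = 1)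
    (hκ : ∀ j : Fin r,
      (∑' l : {l : K.Λ // K.deg l = Pi.single j 1 ∧ K.tgt l = a ∧ K.src l = a},
        ‖v l.1‖ ^ 2) < 1) :
    ∃ ξ : FockSpace K,
      (∀ μ : K.Λ,
        (ξ : ∀ _ : K.Λ, ℂ) μ =
          if K.tgt μ = a ∧ K.src μ = a then (starRingEnd ℂ) (v μ) else 0) ∧
      HasSum (fun l : {l : K.Λ // K.tgt l = a ∧ K.src l = a} => ‖v l.1‖ ^ 2)
        (∏ j : Fin r,
          (1 - ∑' l : {l : K.Λ // K.deg l = Pi.single j 1 ∧ K.tgt l = a ∧ K.src l = a},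
            ‖v l.1‖ ^ 2)⁻¹) ∧
      (∀ μ : K.Λ,
        (inner ℂ (((‖ξ‖⁻¹ : ℝ) : ℂ) • ξ) (L μ ((((‖ξ‖⁻¹ : ℝ) : ℂ)) • ξ)) : ℂ) = v μ) := by
  have hκ_eq := hv.toReal_degWeight ha hva
  have hlt : ∀ j, degWeight K v (Pi.single j 1) < 1 := fun j =>
    (ENNReal.toReal_lt_toReal (ne_top_of_le_ne_top ENNReal.one_ne_top (hv.degWeight_le_one _))
      ENNReal.one_ne_top).1 (by simpa [hκ_eq] using hκ j)
  have hsum := hv.hasSum_norm_sq ha hva hlt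
  simp only [hκ_eq] at hsum
  have hloop : ∀ {μ}, v μ ≠ 0 → K.tgt μ = a ∧ K.src μ = a :=
    hv.tgt_eq_and_src_eq_of_ne_zero ha hva
  let ξ : FockSpace K := ⟨fun l => conj (v l), memℓp_gen (by simpa using hsum.summable)⟩
  have hξ : ξ ≠ 0 := fun h => by simpa [ξ, hva] using congrFun (congrArg Subtype.val h) a
  refine ⟨ξ, fun μ => ?_, ?_, fun μ => ?_⟩
  · split_ifs with h
    · rfl
    · simp [ξ, not_imp_comm.1 hloop h]
  · exact (hasSum_subtype_iff_of_support_subset fun l hl => hloop (by simpa using hl)).2 hsum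
  · exact inner_inv_norm_smul_apply_inv_norm_smul (L μ) hξ
      (hv.inner_apply_creation hL ξ (fun _ => rfl) μ)
end
end

section
/- Let Λ be a finitely aligned rank-r graph which is nontrivial, i.e. there exists λ ∈ Λ with d(λ) ≠ 0. Then there exist a, b ∈ Λ⁰, characters f_a and f_b of A_Λ with f_a(L_a) = 1, f_a(L_λ) = 0 for λ ≠ a, f_b(L_b) = 1, f_b(L_λ) = 0 for λ ≠ b, and a bounded linear functional δ : A_Λ → ℂ satisfying δ(xy) = f_a(x)δ(y) + δ(x)f_b(y) for all x, y ∈ A_Λ, such that δ is not inner: there is no c ∈ ℂ with δ(x) = f_a(x)·c − c·f_b(x) for all x ∈ A_Λ. (In particular the first bounded Hochschild cohomology of A_Λ with coefficients in the bimodule ℂ_{a,b} is nonzero, so A_Λ is not amenable.) -/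
open scoped ComplexOrder
open ContinuousLinearMap

set_option synthInstance.maxHeartbeats 4000000
set_option maxHeartbeats 4000000

noncomputable section

universe u

/-- The noncommutative disc algebra `A_Λ`: the norm-closed unital subalgebra of
`B(ℓ²(Λ))` generated by `I` and the creation operators. -/
def DiscAlgebra {r : ℕ} (K : KGraph r)
    (L : K.Λ → FockSpace K →L[ℂ] FockSpace K) :
    Subalgebra ℂ (FockSpace K →L[ℂ] FockSpace K) :=
  (Algebra.adjoin ℂ (Set.range L)).topologicalClosure

/-!
Pick an edge `e`, a morphism of degree `eⱼ`, and let `a = r(e)`, `b = s(e)`. By unique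
factorisation a vertex `v` factors only as `v v`, and `e` only as `a e` and `e b`. Hence every
creation operator `T`, and by closedness every `T ∈ A_Λ`, satisfies
`ev_a ∘ T = T_aa ev_a`, `ev_b ∘ T = T_bb ev_b` and `ev_e ∘ T = T_aa ev_e + T_eb ev_b` for the
coordinate functionals `ev_v`. So `T ↦ [[T_aa, T_eb], [0, T_bb]]` is multiplicative on `A_Λ`:
its diagonal entries are characters `f_a`, `f_b`, and `T ↦ T_eb` is an `(f_a, f_b)`-derivation.
It equals `1` at `L_e`, where `f_a` and `f_b` both vanish, whereas an inner derivation
`c (f_a - f_b)` vanishes there.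
-/

section Triangular

variable {𝕜 E : Type*} [NontriviallyNormedField 𝕜] [NormedAddCommGroup E] [NormedSpace 𝕜 E]

def IsDualEigenvector (φ : E →L[𝕜] 𝕜) (x : E) (T : E →L[𝕜] E) : Prop :=
  ∀ z, φ (T z) = φ (T x) * φ z

def IsTriangular (φ χ ψ : E →L[𝕜] 𝕜) (x y : E) (T : E →L[𝕜] E) : Prop :=
  IsDualEigenvector φ x T ∧ IsDualEigenvector χ y T ∧
    ∀ z, ψ (T z) = φ (T x) * ψ z + ψ (T y) * χ z

variable {φ χ ψ : E →L[𝕜] 𝕜} {x y : E} {T S : E →L[𝕜] E}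

theorem IsDualEigenvector.apply_mul (hT : IsDualEigenvector φ x T) (S : E →L[𝕜] E) :
    φ ((T * S) x) = φ (T x) * φ (S x) :=
  hT (S x)

theorem IsDualEigenvector.mul (hT : IsDualEigenvector φ x T) (hS : IsDualEigenvector φ x S) :
    IsDualEigenvector φ x (T * S) := fun z => by
  rw [hT.apply_mul, mul_apply_eq_comp, hT, hS, mul_assoc]

theorem IsTriangular.apply_mul (hT : IsTriangular φ χ ψ x y T) (S : E →L[𝕜] E) :
    ψ ((T * S) y) = φ (T x) * ψ (S y) + ψ (T y) * χ (S y) :=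
  hT.2.2 (S y)

variable (φ χ ψ) in
def triangularSubalgebra (hφ : φ x = 1) (hχ : χ y = 1) (hψ : ψ y = 0) :
    Subalgebra 𝕜 (E →L[𝕜] E) where
  carrier := {T | IsTriangular φ χ ψ x y T}
  mul_mem' {T S} hT hS := by
    refine ⟨hT.1.mul hS.1, hT.2.1.mul hS.2.1, fun z => ?_⟩
    rw [hT.apply_mul, hT.1.apply_mul, mul_apply_eq_comp, hT.2.2, hS.2.2, hS.2.1]
    ring
  add_mem' {T S} hT hS := by
    refine ⟨fun z => ?_, fun z => ?_, fun z => ?_⟩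
    · simp only [add_apply, map_add, hT.1 z, hS.1 z]; ring
    · simp only [add_apply, map_add, hT.2.1 z, hS.2.1 z]; ring
    · simp only [add_apply, map_add, hT.2.2 z, hS.2.2 z]; ring
  algebraMap_mem' c := by
    refine ⟨fun z => ?_, fun z => ?_, fun z => ?_⟩ <;>
      simp [Algebra.algebraMap_eq_smul_one, hφ, hχ, hψ]

theorem isClosed_triangularSubalgebra (hφ : φ x = 1) (hχ : χ y = 1) (hψ : ψ y = 0) :
    IsClosed (triangularSubalgebra φ χ ψ hφ hχ hψ : Set (E →L[𝕜] E)) := by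
  show IsClosed {T | IsTriangular φ χ ψ x y T}
  simp only [IsTriangular, IsDualEigenvector, Set.ofPred_and, Set.ofPred_forall]
  refine .inter (isClosed_iInter fun z => ?_) (.inter (isClosed_iInter fun z => ?_)
    (isClosed_iInter fun z => ?_)) <;>
  exact isClosed_eq (by fun_prop) (by fun_prop)

end Triangular

theorem eq_zero_or_eq_zero_of_add_eq_single {ι : Type*} [DecidableEq ι] {a b : ι → ℕ} {j : ι}
    (h : a + b = Pi.single j 1) : a = 0 ∨ b = 0 := by
  have hk (k : ι) : a k + b k = if k = j then 1 else 0 := by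
    rw [← Pi.add_apply, h, Pi.single_apply]
  by_cases ha : a j = 0
  · refine .inl (funext fun k => ?_)
    have := hk k
    split_ifs at this with hkj
    · exact hkj ▸ ha
    · exact Nat.eq_zero_of_add_eq_zero_right this
  · refine .inr (funext fun k => ?_)
    have := hk k
    split_ifs at this with hkj
    · subst hkj; show b k = 0; omega
    · exact Nat.eq_zero_of_add_eq_zero_left this

namespace KGraph

variable {r : ℕ} (K : KGraph r)

def IsEdge (e : K.Λ) : Prop := ∃ j, K.deg e = Pi.single j 1

theorem exists_isEdge (h : ∃ l, K.deg l ≠ 0) : ∃ e, K.IsEdge e := by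
  obtain ⟨l, hl⟩ := h
  obtain ⟨j, hj⟩ := Function.ne_iff.mp hl
  obtain ⟨⟨e, _⟩, ⟨he, -⟩, -⟩ :=
    K.factorisation l (Pi.single j 1) (K.deg l - Pi.single j 1) (by
      ext k
      rcases eq_or_ne k j with rfl | hk
      · simp only [Pi.add_apply, Pi.sub_apply, Pi.single_eq_same]
        simp only [Pi.zero_apply] at hj
        omega
      · simp [hk])
  exact ⟨e, j, he⟩

variable {K}

theorem eq_of_comp_eq_of_deg_fst_eq_zero {l m e : K.Λ} (hlm : K.src l = K.tgt m)
    (he : K.comp l m = e) (hl : K.deg l = 0) : l = K.tgt e ∧ m = e := by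
  obtain ⟨_, -, huniq⟩ := K.factorisation e 0 (K.deg e) (zero_add _).symm
  have hm : K.deg m = K.deg e := by rw [← he, K.deg_comp l m hlm, hl, zero_add]
  have h₁ := huniq (l, m) ⟨hl, hm, hlm, he⟩
  have h₂ := huniq (K.tgt e, e)
    ⟨K.deg_tgt e, rfl, K.src_eq_self _ (K.deg_tgt e), K.tgt_comp_self e⟩
  exact Prod.ext_iff.mp (h₁.trans h₂.symm)

theorem eq_of_comp_eq_of_deg_snd_eq_zero {l m e : K.Λ} (hlm : K.src l = K.tgt m)
    (he : K.comp l m = e) (hm : K.deg m = 0) : l = e ∧ m = K.src e := by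
  obtain ⟨_, -, huniq⟩ := K.factorisation e (K.deg e) 0 (add_zero _).symm
  have hl : K.deg l = K.deg e := by rw [← he, K.deg_comp l m hlm, hm, add_zero]
  have h₁ := huniq (l, m) ⟨hl, hm, hlm, he⟩
  have h₂ := huniq (e, K.src e)
    ⟨rfl, K.deg_src e, (K.tgt_eq_self _ (K.deg_src e)).symm, K.comp_src_self e⟩
  exact Prod.ext_iff.mp (h₁.trans h₂.symm)

theorem comp_eq_vertex_iff {l m v : K.Λ} (hv : K.IsVertex v) :
    K.src l = K.tgt m ∧ K.comp l m = v ↔ l = v ∧ m = v := by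
  constructor
  · rintro ⟨hlm, hcomp⟩
    have hl : K.deg l = 0 := by
      have := K.deg_comp l m hlm
      rw [hcomp, hv] at this
      exact (add_eq_zero.mp this.symm).1
    obtain ⟨rfl, rfl⟩ := eq_of_comp_eq_of_deg_fst_eq_zero hlm hcomp hl
    exact ⟨K.tgt_eq_self _ hv, rfl⟩
  · rintro ⟨hl, hm⟩
    have hsrc := K.src_eq_self v hv
    rw [hl, hm, hsrc, K.tgt_eq_self v hv]
    refine ⟨rfl, ?_⟩
    simpa only [hsrc] using K.comp_src_self v

theorem IsEdge.deg_ne_zero {e : K.Λ} (he : K.IsEdge e) : K.deg e ≠ 0 := by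
  obtain ⟨j, hj⟩ := he
  exact hj ▸ Pi.single_ne_zero_iff.mpr one_ne_zero

theorem IsEdge.tgt_ne {e : K.Λ} (he : K.IsEdge e) : K.tgt e ≠ e :=
  fun h => he.deg_ne_zero (h ▸ K.deg_tgt e)

theorem IsEdge.src_ne {e : K.Λ} (he : K.IsEdge e) : K.src e ≠ e :=
  fun h => he.deg_ne_zero (h ▸ K.deg_src e)

theorem IsEdge.comp_eq_iff {l m e : K.Λ} (he : K.IsEdge e) :
    K.src l = K.tgt m ∧ K.comp l m = e ↔
      (l = K.tgt e ∧ m = e) ∨ (l = e ∧ m = K.src e) := by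
  obtain ⟨j, hj⟩ := he
  constructor
  · rintro ⟨hlm, hcomp⟩
    have hsum : K.deg l + K.deg m = Pi.single j 1 := by rw [← K.deg_comp l m hlm, hcomp, hj]
    rcases eq_zero_or_eq_zero_of_add_eq_single hsum with hl | hm
    · exact .inl (eq_of_comp_eq_of_deg_fst_eq_zero hlm hcomp hl)
    · exact .inr (eq_of_comp_eq_of_deg_snd_eq_zero hlm hcomp hm)
  · rintro (⟨rfl, rfl⟩ | ⟨rfl, rfl⟩)
    · exact ⟨K.src_eq_self _ (K.deg_tgt _), K.tgt_comp_self _⟩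
    · exact ⟨(K.tgt_eq_self _ (K.deg_src _)).symm, K.comp_src_self _⟩

end KGraph

section MatrixCoeff

variable {𝕜 E : Type*} [NontriviallyNormedField 𝕜] [NormedAddCommGroup E] [NormedSpace 𝕜 E]
variable (A : Subalgebra 𝕜 (E →L[𝕜] E)) {φ χ ψ : E →L[𝕜] 𝕜} {x y : E}

def matrixCoeff (φ : E →L[𝕜] 𝕜) (x : E) : A →L[𝕜] 𝕜 :=
  (φ ∘L apply 𝕜 E x).comp A.toSubmodule.subtypeL

@[simp]
theorem matrixCoeff_apply (T : A) : matrixCoeff A φ x T = φ ((T : E →L[𝕜] E) x) := rfl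

def dualEigenCharacter (hA : ∀ T ∈ A, IsDualEigenvector φ x T) (hφ : φ x = 1) :
    WeakDual.characterSpace 𝕜 A :=
  ⟨matrixCoeff A φ x, fun h => one_ne_zero <| hφ.symm.trans (DFunLike.congr_fun h 1),
    fun T S => (hA T T.2).apply_mul S⟩

@[simp]
theorem dualEigenCharacter_apply (hA : ∀ T ∈ A, IsDualEigenvector φ x T) (hφ : φ x = 1)
    (T : A) : dualEigenCharacter A hA hφ T = φ ((T : E →L[𝕜] E) x) := by
  rw [← matrixCoeff_apply]
  rfl

theorem matrixCoeff_mul_of_isTriangular (hA : ∀ T ∈ A, IsTriangular φ χ ψ x y T) (T S : A) :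
    matrixCoeff A ψ y (T * S) =
      matrixCoeff A φ x T * matrixCoeff A ψ y S + matrixCoeff A ψ y T * matrixCoeff A χ y S :=
  (hA T T.2).apply_mul S

end MatrixCoeff

namespace FockSpace

variable {r : ℕ} {K : KGraph r}

def coord (i : K.Λ) : FockSpace K →L[ℂ] ℂ := lp.evalCLM ℂ (fun _ : K.Λ => ℂ) 2 i

@[simp]
theorem coord_apply (i : K.Λ) (ξ : FockSpace K) : coord i ξ = ξ i := rfl

@[simp]
theorem coord_single_self [DecidableEq K.Λ] (i : K.Λ) : coord i (lp.single 2 i (1 : ℂ)) = 1 :=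
  lp.single_apply_self 2 i _

theorem ext_single {F : Type*} [AddCommMonoid F] [Module ℂ F] [TopologicalSpace F] [T2Space F]
    [DecidableEq K.Λ] {f g : FockSpace K →L[ℂ] F}
    (h : ∀ m, f (lp.single 2 m 1) = g (lp.single 2 m 1)) : f = g :=
  lp.ext_continuousLinearMap ENNReal.ofNat_ne_top fun m => ContinuousLinearMap.ext_ring (h m)

end FockSpace

namespace IsCreationFamily

open FockSpace

variable {r : ℕ} {K : KGraph r} [DecidableEq K.Λ] {L : K.Λ → FockSpace K →L[ℂ] FockSpace K}

theorem apply_single_apply (hL : IsCreationFamily K L) (l m i : K.Λ) :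
    L l (lp.single 2 m 1) i = if K.src l = K.tgt m ∧ K.comp l m = i then 1 else 0 := by
  by_cases hlm : K.src l = K.tgt m
  · simp [(hL l m).1 hlm, lp.single_apply, hlm, Pi.single_apply, eq_comm]
  · simp [(hL l m).2 hlm, hlm]

theorem apply_single_vertex (hL : IsCreationFamily K L) {v : K.Λ} (hv : K.IsVertex v)
    (l : K.Λ) : L l (lp.single 2 v 1) v = if l = v then 1 else 0 := by
  simp [hL.apply_single_apply, K.comp_eq_vertex_iff hv]

theorem apply_single_src_self (hL : IsCreationFamily K L) (l : K.Λ) :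
    L l (lp.single 2 (K.src l) 1) l = 1 := by
  rw [(hL l _).1 (K.tgt_eq_self _ (K.deg_src l)).symm, K.comp_src_self]
  exact lp.single_apply_self 2 l _

theorem isDualEigenvector (hL : IsCreationFamily K L) {v : K.Λ} (hv : K.IsVertex v) (l : K.Λ) :
    IsDualEigenvector (coord v) (lp.single 2 v 1) (L l) := by
  suffices coord v ∘L L l = L l (lp.single 2 v 1) v • coord v from
    fun z => DFunLike.congr_fun this z
  refine ext_single fun m => ?_
  rw [comp_apply, smul_apply, coord_apply, coord_apply, hL.apply_single_apply,
    hL.apply_single_vertex hv]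
  simp only [K.comp_eq_vertex_iff hv, lp.single_apply, Pi.single_apply, smul_eq_mul,
    ite_zero_mul_ite_zero, mul_one, @eq_comm _ v m]

theorem isTriangular (hL : IsCreationFamily K L) {e : K.Λ} (he : K.IsEdge e) (l : K.Λ) :
    IsTriangular (coord (K.tgt e)) (coord (K.src e)) (coord e)
      (lp.single 2 (K.tgt e) 1) (lp.single 2 (K.src e) 1) (L l) := by
  refine ⟨hL.isDualEigenvector (K.deg_tgt e) l, hL.isDualEigenvector (K.deg_src e) l, ?_⟩
  suffices coord e ∘L L l = L l (lp.single 2 (K.tgt e) 1) (K.tgt e) • coord e +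
      L l (lp.single 2 (K.src e) 1) e • coord (K.src e) from
    fun z => DFunLike.congr_fun this z
  refine ext_single fun m => ?_
  rw [comp_apply, add_apply, smul_apply, smul_apply, coord_apply, coord_apply, coord_apply,
    hL.apply_single_vertex (K.deg_tgt e), hL.apply_single_apply, hL.apply_single_apply]
  simp only [he.comp_eq_iff, lp.single_apply, Pi.single_apply, smul_eq_mul]
  have hae := he.tgt_ne
  have hbe := he.src_ne
  split_ifs <;> grind

theorem isTriangular_of_mem_discAlgebra (hL : IsCreationFamily K L) {e : K.Λ} (he : K.IsEdge e)
    {T : FockSpace K →L[ℂ] FockSpace K} (hT : T ∈ DiscAlgebra K L) :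
    IsTriangular (coord (K.tgt e)) (coord (K.src e)) (coord e)
      (lp.single 2 (K.tgt e) 1) (lp.single 2 (K.src e) 1) T := by
  have hψ : coord e (lp.single 2 (K.src e) (1 : ℂ)) = 0 :=
    lp.single_apply_ne 2 _ _ he.src_ne.symm
  have hle : DiscAlgebra K L ≤ triangularSubalgebra (coord (K.tgt e)) (coord (K.src e)) (coord e)
      (coord_single_self _) (coord_single_self _) hψ :=
    Subalgebra.topologicalClosure_minimal
      (Algebra.adjoin_le (Set.range_subset_iff.mpr (hL.isTriangular he)))
      (isClosed_triangularSubalgebra _ _ _)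
  exact hle hT

end IsCreationFamily

theorem disc_algebra_not_amenable_general
    {r : ℕ} (K : KGraph r) [DecidableEq K.Λ]
    (hnontriv : ∃ l : K.Λ, K.deg l ≠ 0)
    (L : K.Λ → FockSpace K →L[ℂ] FockSpace K) (hL : IsCreationFamily K L)
    (hmem : ∀ l : K.Λ, L l ∈ DiscAlgebra K L) :
    ∃ (a b : K.Λ), K.IsVertex a ∧ K.IsVertex b ∧
      ∃ (fa fb : ↑(WeakDual.characterSpace ℂ ↥(DiscAlgebra K L))),
        fa ⟨L a, hmem a⟩ = 1 ∧ (∀ l : K.Λ, l ≠ a → fa ⟨L l, hmem l⟩ = 0) ∧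
        fb ⟨L b, hmem b⟩ = 1 ∧ (∀ l : K.Λ, l ≠ b → fb ⟨L l, hmem l⟩ = 0) ∧
        ∃ δ : ↥(DiscAlgebra K L) →L[ℂ] ℂ,
          (∀ x y : ↥(DiscAlgebra K L), δ (x * y) = fa x * δ y + δ x * fb y) ∧
          ¬∃ c : ℂ, ∀ x : ↥(DiscAlgebra K L), δ x = fa x * c - c * fb x := by
  obtain ⟨e, he⟩ := K.exists_isEdge hnontriv
  have hA := fun T (hT : T ∈ DiscAlgebra K L) => hL.isTriangular_of_mem_discAlgebra he hT
  have ha : K.IsVertex (K.tgt e) := K.deg_tgt e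
  have hb : K.IsVertex (K.src e) := K.deg_src e
  refine ⟨K.tgt e, K.src e, ha, hb,
    dualEigenCharacter _ (fun T hT => (hA T hT).1) (by simp),
    dualEigenCharacter _ (fun T hT => (hA T hT).2.1) (by simp), ?_, ?_, ?_, ?_,
    matrixCoeff _ (FockSpace.coord e) (lp.single 2 (K.src e) 1),
    matrixCoeff_mul_of_isTriangular _ hA, ?_⟩
  · simp [hL.apply_single_vertex ha]
  · intro l hl
    simp [hL.apply_single_vertex ha, hl]
  · simp [hL.apply_single_vertex hb]
  · intro l hl
    simp [hL.apply_single_vertex hb, hl]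
  · rintro ⟨c, hc⟩
    have := hc ⟨L e, hmem e⟩
    simp [hL.apply_single_vertex ha, hL.apply_single_vertex hb, hL.apply_single_src_self,
      he.tgt_ne.symm, he.src_ne.symm] at this

/-- For a nontrivial finitely aligned `Λ`, the algebra `A_Λ` admits a
bounded non-inner derivation into some bimodule `ℂ_{a,b}`; in particular `A_Λ` is not
amenable. -/
theorem disc_algebra_not_amenable
    {r : ℕ} (K : KGraph r) [DecidableEq K.Λ] (hFA : K.FinitelyAligned)
    (hnontriv : ∃ l : K.Λ, K.deg l ≠ 0)
    (L : K.Λ → FockSpace K →L[ℂ] FockSpace K) (hL : IsCreationFamily K L)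
    (hmem : ∀ l : K.Λ, L l ∈ DiscAlgebra K L) :
    ∃ (a b : K.Λ), K.IsVertex a ∧ K.IsVertex b ∧
      ∃ (fa fb : ↑(WeakDual.characterSpace ℂ ↥(DiscAlgebra K L))),
        fa ⟨L a, hmem a⟩ = 1 ∧ (∀ l : K.Λ, l ≠ a → fa ⟨L l, hmem l⟩ = 0) ∧
        fb ⟨L b, hmem b⟩ = 1 ∧ (∀ l : K.Λ, l ≠ b → fb ⟨L l, hmem l⟩ = 0) ∧
        ∃ δ : ↥(DiscAlgebra K L) →L[ℂ] ℂ,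
          (∀ x y : ↥(DiscAlgebra K L), δ (x * y) = fa x * δ y + δ x * fb y) ∧
          ¬∃ c : ℂ, ∀ x : ↥(DiscAlgebra K L), δ x = fa x * c - c * fb x :=
  disc_algebra_not_amenable_general K hnontriv L hL hmem
end
end
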